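/- arXiv:2211.04080 — 7 statements merged into one kernel-verified Lean document; each statement's English description precedes it below -/
import Mathlib

section
/- For 0 < q ≤ 1 and s ≥ 0, ℓ^q_{v_s}(ℤ^d) is an algebra under discrete convolution: if a, b ∈ ℓ^q_{v_s}(ℤ^d), then a∗b ∈ ℓ^q_{v_s}(ℤ^d) and ‖a∗b‖_{ℓ^q_{v_s}} ≤ ‖a‖_{ℓ^q_{v_s}} ‖b‖_{ℓ^q_{v_s}}. -/
/-!
Since `0 < q ≤ 1`, the map `x ↦ x ^ q` is subadditive, so `‖∑ⱼ a(k-j) b(j)‖^q ≤ ∑ⱼ ‖a(k-j)‖^q ‖b(j)‖^q`,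
and submultiplicativity of the weight gives `v(k)^q ≤ v(k-j)^q v(j)^q`. Summing over `k` and
exchanging the order of summation (harmless for nonnegative terms, so we work in `ℝ≥0∞`), the
`q`-th power of the weighted norm of `a ∗ b` is at most the product of those of `a` and `b`.
-/

open scoped ENNReal

namespace ENNReal

theorem rpow_tsum_le_tsum_rpow {ι : Type*} (f : ι → ℝ≥0∞) {q : ℝ} (hq0 : 0 < q) (hq1 : q ≤ 1) :
    (∑' i, f i) ^ q ≤ ∑' i, f i ^ q := by
  have hmono : Monotone fun x : ℝ≥0∞ => x ^ q := monotone_rpow_of_nonneg hq0.le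
  rw [ENNReal.tsum_eq_iSup_sum, hmono.map_iSup_of_continuousAt continuous_rpow_const.continuousAt
    (zero_rpow_of_pos hq0)]
  exact iSup_le fun s => (Finset.le_sum_of_subadditive (· ^ q) (zero_rpow_of_pos hq0).le
    (fun x y => rpow_add_le_add_rpow x y hq0.le hq1) s f).trans (ENNReal.sum_le_tsum s)

theorem tsum_tsum_sub_mul_eq_tsum_mul_tsum {G : Type*} [AddGroup G] (f g : G → ℝ≥0∞) :
    ∑' k, ∑' j, f (k - j) * g j = (∑' k, f k) * ∑' k, g k := by
  rw [ENNReal.tsum_comm, ← ENNReal.tsum_mul_left]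
  refine tsum_congr fun j => ?_
  rw [ENNReal.tsum_mul_right]
  exact congrArg (· * g j) ((Equiv.subRight j).tsum_eq f)

theorem summable_and_tsum_le_of_tsum_ofReal_le {ι : Type*} {f : ι → ℝ} {C : ℝ}
    (hf : ∀ i, 0 ≤ f i) (hC : 0 ≤ C) (h : ∑' i, ENNReal.ofReal (f i) ≤ ENNReal.ofReal C) :
    Summable f ∧ ∑' i, f i ≤ C := by
  have hs : Summable f :=
    (summable_toReal (ne_top_of_le_ne_top ofReal_ne_top h)).congr fun i => toReal_ofReal (hf i)
  refine ⟨hs, ?_⟩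
  rwa [← ofReal_le_ofReal_iff hC, ofReal_tsum_of_nonneg hf hs]

end ENNReal

theorem enorm_tsum_rpow_le_tsum_enorm_rpow {ι E : Type*} [NormedAddCommGroup E] (f : ι → E)
    {q : ℝ} (hq0 : 0 < q) (hq1 : q ≤ 1) : ‖∑' i, f i‖ₑ ^ q ≤ ∑' i, ‖f i‖ₑ ^ q :=
  (ENNReal.rpow_le_rpow (enorm_tsum_le_tsum_enorm (f := f)) hq0.le).trans
    (ENNReal.rpow_tsum_le_tsum_rpow _ hq0 hq1)

theorem enorm_mul_le_mul_enorm {R : Type*} [NonUnitalSeminormedRing R] (x y : R) :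
    ‖x * y‖ₑ ≤ ‖x‖ₑ * ‖y‖ₑ := by
  simpa [enorm_eq_nnnorm] using ENNReal.coe_le_coe.2 (nnnorm_mul_le x y)

theorem one_add_norm_rpow_add_le {E : Type*} [SeminormedAddGroup E] {s : ℝ} (hs : 0 ≤ s)
    (x y : E) : (1 + ‖x + y‖) ^ s ≤ (1 + ‖x‖) ^ s * (1 + ‖y‖) ^ s := by
  rw [← Real.mul_rpow (by positivity) (by positivity)]
  gcongr
  nlinarith [norm_add_le x y, norm_nonneg x, norm_nonneg y]

section WeightedConvolution

variable {G R : Type*} [AddCommGroup G] [NonUnitalNormedRing R] {q : ℝ}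

theorem enorm_conv_rpow_mul_le (hq0 : 0 < q) (hq1 : q ≤ 1) {w : G → ℝ≥0∞}
    (hw : ∀ x y, w (x + y) ≤ w x * w y) (a b : G → R) (k : G) :
    ‖∑' j, a (k - j) * b j‖ₑ ^ q * w k ≤
      ∑' j, ‖a (k - j)‖ₑ ^ q * w (k - j) * (‖b j‖ₑ ^ q * w j) := by
  calc ‖∑' j, a (k - j) * b j‖ₑ ^ q * w k
      ≤ (∑' j, ‖a (k - j) * b j‖ₑ ^ q) * w k := by
        gcongr; exact enorm_tsum_rpow_le_tsum_enorm_rpow _ hq0 hq1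
    _ = ∑' j, ‖a (k - j) * b j‖ₑ ^ q * w k := ENNReal.tsum_mul_right.symm
    _ ≤ _ := ENNReal.tsum_le_tsum fun j => ?_
  calc ‖a (k - j) * b j‖ₑ ^ q * w k
      ≤ (‖a (k - j)‖ₑ * ‖b j‖ₑ) ^ q * (w (k - j) * w j) := by
        gcongr
        · exact enorm_mul_le_mul_enorm _ _
        · simpa using hw (k - j) j
    _ = _ := by rw [ENNReal.mul_rpow_of_nonneg _ _ hq0.le]; ring

theorem tsum_enorm_conv_rpow_mul_le (hq0 : 0 < q) (hq1 : q ≤ 1) {w : G → ℝ≥0∞}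
    (hw : ∀ x y, w (x + y) ≤ w x * w y) (a b : G → R) :
    ∑' k, ‖∑' j, a (k - j) * b j‖ₑ ^ q * w k ≤
      (∑' k, ‖a k‖ₑ ^ q * w k) * ∑' k, ‖b k‖ₑ ^ q * w k :=
  (ENNReal.tsum_le_tsum (enorm_conv_rpow_mul_le hq0 hq1 hw a b)).trans_eq
    (ENNReal.tsum_tsum_sub_mul_eq_tsum_mul_tsum (fun k => ‖a k‖ₑ ^ q * w k)
      fun k => ‖b k‖ₑ ^ q * w k)

theorem summable_conv_rpow_mul_and_tsum_le (hq0 : 0 < q) (hq1 : q ≤ 1) {v : G → ℝ}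
    (hv0 : ∀ x, 0 ≤ v x) (hv : ∀ x y, v (x + y) ≤ v x * v y) (a b : G → R)
    (ha : Summable fun k => ‖a k‖ ^ q * v k ^ q) (hb : Summable fun k => ‖b k‖ ^ q * v k ^ q) :
    Summable (fun k => ‖∑' j, a (k - j) * b j‖ ^ q * v k ^ q) ∧
      ∑' k, ‖∑' j, a (k - j) * b j‖ ^ q * v k ^ q ≤
        (∑' k, ‖a k‖ ^ q * v k ^ q) * ∑' k, ‖b k‖ ^ q * v k ^ q := by
  have hterm_nonneg : ∀ (x : R) k, 0 ≤ ‖x‖ ^ q * v k ^ q := fun x k =>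
    mul_nonneg (Real.rpow_nonneg (norm_nonneg x) q) (Real.rpow_nonneg (hv0 k) q)
  have hofReal : ∀ (x : R) k,
      ENNReal.ofReal (‖x‖ ^ q * v k ^ q) = ‖x‖ₑ ^ q * ENNReal.ofReal (v k ^ q) := fun x k => by
    rw [ENNReal.ofReal_mul (Real.rpow_nonneg (norm_nonneg x) q),
      ← ENNReal.ofReal_rpow_of_nonneg (norm_nonneg x) hq0.le, ofReal_norm]
  have hw : ∀ x y, ENNReal.ofReal (v (x + y) ^ q) ≤
      ENNReal.ofReal (v x ^ q) * ENNReal.ofReal (v y ^ q) := fun x y => by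
    rw [← ENNReal.ofReal_mul (Real.rpow_nonneg (hv0 x) q), ← Real.mul_rpow (hv0 x) (hv0 y)]
    exact ENNReal.ofReal_le_ofReal (Real.rpow_le_rpow (hv0 _) (hv x y) hq0.le)
  have hnorm_tsum : ∀ c : G → R, Summable (fun k => ‖c k‖ ^ q * v k ^ q) →
      ∑' k, ‖c k‖ₑ ^ q * ENNReal.ofReal (v k ^ q) =
        ENNReal.ofReal (∑' k, ‖c k‖ ^ q * v k ^ q) := fun c hc => by
    rw [ENNReal.ofReal_tsum_of_nonneg (fun k => hterm_nonneg (c k) k) hc]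
    exact tsum_congr fun k => (hofReal (c k) k).symm
  refine ENNReal.summable_and_tsum_le_of_tsum_ofReal_le (fun k => hterm_nonneg _ k)
    (mul_nonneg (tsum_nonneg fun k => hterm_nonneg _ k) (tsum_nonneg fun k => hterm_nonneg _ k)) ?_
  rw [ENNReal.ofReal_mul (tsum_nonneg fun k => hterm_nonneg _ k), ← hnorm_tsum a ha,
    ← hnorm_tsum b hb]
  simpa only [hofReal] using tsum_enorm_conv_rpow_mul_le hq0 hq1 hw a b

end WeightedConvolution

/-- `ℓ^q_{v_s}(ℤ^d)`, `0 < q ≤ 1`, `s ≥ 0`, is an algebra under discrete convolution: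
`‖a∗b‖_{ℓ^q_{v_s}} ≤ ‖a‖_{ℓ^q_{v_s}} ‖b‖_{ℓ^q_{v_s}}`. -/
theorem conv_algebra_lq_vs (d : ℕ) (q s : ℝ) (hq0 : 0 < q) (hq1 : q ≤ 1) (hs : 0 ≤ s)
    (v : (Fin d → ℤ) → ℝ)
    (hv : ∀ k, v k = (1 + ‖(fun i => (k i : ℝ) : Fin d → ℝ)‖) ^ s)
    (a b : (Fin d → ℤ) → ℂ)
    (ha : Summable fun k => ‖a k‖ ^ q * v k ^ q)
    (hb : Summable fun k => ‖b k‖ ^ q * v k ^ q) :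
    Summable (fun k => ‖∑' j, a (k - j) * b j‖ ^ q * v k ^ q) ∧
      (∑' k, ‖∑' j, a (k - j) * b j‖ ^ q * v k ^ q) ^ (1 / q) ≤
        (∑' k, ‖a k‖ ^ q * v k ^ q) ^ (1 / q) * (∑' k, ‖b k‖ ^ q * v k ^ q) ^ (1 / q) := by
  have hv0 : ∀ k, 0 ≤ v k := fun k => by rw [hv]; positivity
  have hv_mul : ∀ x y, v (x + y) ≤ v x * v y := fun x y => by
    have hcast : (fun i => ((x + y) i : ℝ)) = (fun i => (x i : ℝ)) + fun i => (y i : ℝ) := by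
      funext i; simp
    rw [hv, hv, hv, hcast]
    exact one_add_norm_rpow_add_le hs _ _
  have hterm_nonneg : ∀ (c : (Fin d → ℤ) → ℂ) k, 0 ≤ ‖c k‖ ^ q * v k ^ q := fun c k =>
    mul_nonneg (Real.rpow_nonneg (norm_nonneg _) q) (Real.rpow_nonneg (hv0 k) q)
  obtain ⟨hsum, hle⟩ := summable_conv_rpow_mul_and_tsum_le hq0 hq1 hv0 hv_mul a b ha hb
  refine ⟨hsum, ?_⟩
  rw [← Real.mul_rpow (tsum_nonneg (hterm_nonneg a)) (tsum_nonneg (hterm_nonneg b))]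
  exact Real.rpow_le_rpow (tsum_nonneg (hterm_nonneg _)) hle (by positivity)
end

section
/- Young's inequality in the quasi-Banach range: let 0 < r < 1, v a submultiplicative weight on ℤ^d, and m a v-moderate weight. If a ∈ ℓ^r_m(ℤ^d) and b ∈ ℓ^r_v(ℤ^d), then a∗b ∈ ℓ^r_m(ℤ^d) with ‖a∗b‖_{ℓ^r_m} ≤ C ‖a‖_{ℓ^r_m} ‖b‖_{ℓ^r_v} for a constant C depending only on m and v (and C = 1 when m ≡ v ≡ 1). -/
/-!
For `0 < r ≤ 1` the map `t ↦ t ^ r` is subadditive on `[0, ∞)`, hence `‖∑ xⱼ‖ ^ r ≤ ∑ ‖xⱼ‖ ^ r`.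
Applied to the convolution sum together with the moderateness `m k ≤ C v j m (k - j)`, this bounds
`‖(a ∗ b) k‖ ^ r m k ^ r` by `C ^ r` times the convolution of the nonnegative sequences
`‖a‖ ^ r m ^ r` and `‖b‖ ^ r v ^ r`, whose total sum is the product of their sums (Fubini after the
shear `(k, j) ↦ (k - j, j)`). Taking `r`-th roots gives the constant `C`, which is `1` when
`m ≡ v ≡ 1`.
-/

open Filter

namespace Real

variable {ι : Type*} {r : ℝ} {f : ι → ℝ}

theorem rpow_sum_le_sum_rpow (s : Finset ι) (hf : ∀ i, 0 ≤ f i) (hr0 : 0 < r) (hr1 : r ≤ 1) :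
    (∑ i ∈ s, f i) ^ r ≤ ∑ i ∈ s, f i ^ r :=
  Finset.le_sum_of_subadditive_on_pred (· ^ r) (0 ≤ ·) (zero_rpow hr0.ne').le
    (fun _ _ hx hy => rpow_add_le_add_rpow hx hy hr0.le hr1) (fun _ _ => add_nonneg) f
    fun i _ => hf i

theorem summable_of_summable_rpow (hf : ∀ i, 0 ≤ f i) (hr0 : 0 < r) (hr1 : r ≤ 1)
    (h : Summable fun i => f i ^ r) : Summable f := by
  refine Summable.of_norm_bounded_eventually h ?_
  filter_upwards [h.tendsto_cofinite_zero.eventually (ge_mem_nhds one_pos)] with i hi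
  calc ‖f i‖ = (f i ^ r) ^ r⁻¹ := by rw [norm_of_nonneg (hf i), rpow_rpow_inv (hf i) hr0.ne']
    _ ≤ f i ^ r := rpow_le_self_of_le_one (rpow_nonneg (hf i) r) hi (one_le_inv_iff₀.2 ⟨hr0, hr1⟩)

theorem rpow_tsum_le_tsum_rpow (hf : ∀ i, 0 ≤ f i) (hr0 : 0 < r) (hr1 : r ≤ 1)
    (h : Summable fun i => f i ^ r) : (∑' i, f i) ^ r ≤ ∑' i, f i ^ r := by
  have hsum : Tendsto (fun s : Finset ι => (∑ i ∈ s, f i) ^ r) atTop (nhds ((∑' i, f i) ^ r)) :=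
    ((continuousAt_rpow_const _ r (.inr hr0.le)).tendsto).comp
      (summable_of_summable_rpow hf hr0 hr1 h).hasSum
  refine le_of_tendsto hsum (Eventually.of_forall fun s => ?_)
  exact (rpow_sum_le_sum_rpow s hf hr0 hr1).trans
    (h.sum_le_tsum s fun i _ => rpow_nonneg (hf i) r)

end Real

theorem norm_tsum_rpow_le_tsum_norm_rpow {ι E : Type*} [SeminormedAddCommGroup E] {f : ι → E}
    {r : ℝ} (hr0 : 0 < r) (hr1 : r ≤ 1) (h : Summable fun i => ‖f i‖ ^ r) :
    ‖∑' i, f i‖ ^ r ≤ ∑' i, ‖f i‖ ^ r :=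
  calc ‖∑' i, f i‖ ^ r ≤ (∑' i, ‖f i‖) ^ r :=
        Real.rpow_le_rpow (norm_nonneg _) (norm_tsum_le_tsum_norm
          (Real.summable_of_summable_rpow (fun _ => norm_nonneg _) hr0 hr1 h)) hr0.le
    _ ≤ ∑' i, ‖f i‖ ^ r := Real.rpow_tsum_le_tsum_rpow (fun _ => norm_nonneg _) hr0 hr1 h

def Equiv.prodSubShear (G : Type*) [AddGroup G] : G × G ≃ G × G where
  toFun p := (p.1 - p.2, p.2)
  invFun p := (p.1 + p.2, p.2)
  left_inv p := by simp
  right_inv p := by simp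

section Convolution

variable {G : Type*} [AddCommGroup G] {A B : G → ℝ}

theorem Summable.prod_sub_mul_of_nonneg (hA : Summable A) (hB : Summable B) (hA0 : 0 ≤ A)
    (hB0 : 0 ≤ B) : Summable fun p : G × G => A (p.1 - p.2) * B p.2 :=
  (Equiv.prodSubShear G).summable_iff.2 (hA.mul_of_nonneg hB hA0 hB0)

theorem hasSum_tsum_sub_mul_of_nonneg (hA : Summable A) (hB : Summable B) (hA0 : 0 ≤ A)
    (hB0 : 0 ≤ B) : HasSum (fun k => ∑' j, A (k - j) * B j) ((∑' k, A k) * ∑' k, B k) := by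
  have hprod := hA.mul_of_nonneg hB hA0 hB0
  have hshear : HasSum (fun p : G × G => A (p.1 - p.2) * B p.2) ((∑' k, A k) * ∑' k, B k) := by
    rw [hA.tsum_mul_tsum hB hprod]
    exact (Equiv.prodSubShear G).hasSum_iff.2 hprod.hasSum
  exact hshear.prod_fiberwise fun k => (hshear.summable.prod_factor k).hasSum

end Convolution

section Young

variable {G E : Type*} [AddCommGroup G] [NonUnitalSeminormedRing E] {r C : ℝ} {v m : G → ℝ}

theorem norm_mul_rpow_mul_rpow_le (hr0 : 0 ≤ r) (hC : 0 ≤ C) (hv : ∀ k, 0 ≤ v k)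
    (hm : ∀ k, 0 ≤ m k) (hmod : ∀ j k, m (j + k) ≤ C * v j * m k) (x y : E) (j k : G) :
    ‖x * y‖ ^ r * m k ^ r ≤ C ^ r * ((‖x‖ ^ r * m (k - j) ^ r) * (‖y‖ ^ r * v j ^ r)) := by
  have hmk : m k ≤ C * v j * m (k - j) := by simpa using hmod j (k - j)
  have hbase : ‖x * y‖ * m k ≤ C * ((‖x‖ * m (k - j)) * (‖y‖ * v j)) :=
    calc ‖x * y‖ * m k ≤ (‖x‖ * ‖y‖) * (C * v j * m (k - j)) :=
          mul_le_mul (norm_mul_le x y) hmk (hm k) (by positivity)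
      _ = C * ((‖x‖ * m (k - j)) * (‖y‖ * v j)) := by ring
  have := hv j
  have := hm k
  have := hm (k - j)
  calc ‖x * y‖ ^ r * m k ^ r = (‖x * y‖ * m k) ^ r := (Real.mul_rpow (norm_nonneg _) (hm k)).symm
    _ ≤ (C * ((‖x‖ * m (k - j)) * (‖y‖ * v j))) ^ r := by gcongr
    _ = C ^ r * ((‖x‖ ^ r * m (k - j) ^ r) * (‖y‖ ^ r * v j ^ r)) := by
      rw [Real.mul_rpow hC (by positivity), Real.mul_rpow (by positivity) (by positivity),
        Real.mul_rpow (by positivity) (hm _), Real.mul_rpow (by positivity) (hv _)]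

theorem norm_tsum_sub_mul_rpow_le (hr0 : 0 < r) (hr1 : r ≤ 1) (hC : 0 ≤ C) (hv : ∀ k, 0 ≤ v k)
    (hm : ∀ k, 0 < m k) (hmod : ∀ j k, m (j + k) ≤ C * v j * m k) (a b : G → E) (k : G)
    (hsum : Summable fun j => (‖a (k - j)‖ ^ r * m (k - j) ^ r) * (‖b j‖ ^ r * v j ^ r)) :
    ‖∑' j, a (k - j) * b j‖ ^ r * m k ^ r ≤
      C ^ r * ∑' j, (‖a (k - j)‖ ^ r * m (k - j) ^ r) * (‖b j‖ ^ r * v j ^ r) := by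
  have hpoint := fun j => norm_mul_rpow_mul_rpow_le hr0.le hC hv (fun k => (hm k).le) hmod
    (a (k - j)) (b j) j k
  have hmk : 0 < m k ^ r := Real.rpow_pos_of_pos (hm k) r
  have hterms : Summable fun j => ‖a (k - j) * b j‖ ^ r :=
    .of_nonneg_of_le (fun _ => by positivity) (fun j => (le_div_iff₀ hmk).2 (hpoint j))
      ((hsum.mul_left (C ^ r)).div_const (m k ^ r))
  calc ‖∑' j, a (k - j) * b j‖ ^ r * m k ^ r
      ≤ (∑' j, ‖a (k - j) * b j‖ ^ r) * m k ^ r := by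
        gcongr
        exact norm_tsum_rpow_le_tsum_norm_rpow hr0 hr1 hterms
    _ = ∑' j, ‖a (k - j) * b j‖ ^ r * m k ^ r := hterms.tsum_mul_right _ |>.symm
    _ ≤ ∑' j, C ^ r * ((‖a (k - j)‖ ^ r * m (k - j) ^ r) * (‖b j‖ ^ r * v j ^ r)) :=
        (hterms.mul_right _).tsum_le_tsum hpoint (hsum.mul_left _)
    _ = C ^ r * ∑' j, (‖a (k - j)‖ ^ r * m (k - j) ^ r) * (‖b j‖ ^ r * v j ^ r) :=
        tsum_mul_left

theorem summable_and_tsum_norm_tsum_sub_mul_rpow_le (hr0 : 0 < r) (hr1 : r ≤ 1) (hC : 0 ≤ C)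
    (hv : ∀ k, 0 ≤ v k) (hm : ∀ k, 0 < m k) (hmod : ∀ j k, m (j + k) ≤ C * v j * m k)
    (a b : G → E) (ha : Summable fun k => ‖a k‖ ^ r * m k ^ r)
    (hb : Summable fun k => ‖b k‖ ^ r * v k ^ r) :
    Summable (fun k => ‖∑' j, a (k - j) * b j‖ ^ r * m k ^ r) ∧
      ∑' k, ‖∑' j, a (k - j) * b j‖ ^ r * m k ^ r ≤
        C ^ r * ((∑' k, ‖a k‖ ^ r * m k ^ r) * ∑' k, ‖b k‖ ^ r * v k ^ r) := by
  have hA0 : 0 ≤ fun k => ‖a k‖ ^ r * m k ^ r := fun k => by have := hm k; positivity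
  have hB0 : 0 ≤ fun k => ‖b k‖ ^ r * v k ^ r := fun k => by have := hv k; positivity
  have hconv := hasSum_tsum_sub_mul_of_nonneg ha hb hA0 hB0
  have hbound := fun k => norm_tsum_sub_mul_rpow_le hr0 hr1 hC hv hm hmod a b k
    ((ha.prod_sub_mul_of_nonneg hb hA0 hB0).prod_factor k)
  have hsum : Summable fun k => ‖∑' j, a (k - j) * b j‖ ^ r * m k ^ r :=
    .of_nonneg_of_le (fun k => by have := hm k; positivity) hbound
      (hconv.summable.mul_left _)
  refine ⟨hsum, ?_⟩
  calc ∑' k, ‖∑' j, a (k - j) * b j‖ ^ r * m k ^ r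
      ≤ ∑' k, C ^ r * ∑' j, (‖a (k - j)‖ ^ r * m (k - j) ^ r) * (‖b j‖ ^ r * v j ^ r) :=
        hsum.tsum_le_tsum hbound (hconv.summable.mul_left _)
    _ = C ^ r * ((∑' k, ‖a k‖ ^ r * m k ^ r) * ∑' k, ‖b k‖ ^ r * v k ^ r) := by
        rw [tsum_mul_left, hconv.tsum_eq]

end Young

theorem Real.rpow_one_div_le_mul_of_le_rpow_mul {r C S X Y : ℝ} (hr : 0 < r) (hC : 0 ≤ C)
    (hS : 0 ≤ S) (hX : 0 ≤ X) (hY : 0 ≤ Y) (h : S ≤ C ^ r * (X * Y)) :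
    S ^ (1 / r) ≤ C * X ^ (1 / r) * Y ^ (1 / r) :=
  calc S ^ (1 / r) ≤ (C ^ r * (X * Y)) ^ (1 / r) := by gcongr
    _ = C * X ^ (1 / r) * Y ^ (1 / r) := by
      rw [Real.mul_rpow (by positivity) (by positivity), Real.mul_rpow hX hY,
        ← Real.rpow_mul hC, mul_one_div_cancel hr.ne', Real.rpow_one, mul_assoc]

theorem pos_of_moderate {G : Type*} [AddZeroClass G] {v m : G → ℝ} {C : ℝ} (hv : ∀ k, 0 ≤ v k)
    (hm : ∀ k, 0 < m k) (hmod : ∀ j k, m (j + k) ≤ C * v j * m k) : 0 < C := by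
  have h : m 0 ≤ C * v 0 * m 0 := by simpa using hmod 0 0
  by_contra! hC
  nlinarith [mul_nonpos_of_nonpos_of_nonneg hC (hv 0), hm 0]

theorem young_quasi_general (d : ℕ) (r : ℝ) (hr0 : 0 < r) (hr1 : r < 1)
    (v m : (Fin d → ℤ) → ℝ) (hv_pos : ∀ k, 0 < v k) (hm_pos : ∀ k, 0 < m k)
    (Cm : ℝ) (hmod : ∀ j k, m (j + k) ≤ Cm * v j * m k) :
    (∃ C > 0, ∀ a b : (Fin d → ℤ) → ℂ,
        Summable (fun k => ‖a k‖ ^ r * m k ^ r) →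
        Summable (fun k => ‖b k‖ ^ r * v k ^ r) →
        Summable (fun k => ‖∑' j, a (k - j) * b j‖ ^ r * m k ^ r) ∧
          (∑' k, ‖∑' j, a (k - j) * b j‖ ^ r * m k ^ r) ^ (1 / r) ≤
            C * (∑' k, ‖a k‖ ^ r * m k ^ r) ^ (1 / r) *
              (∑' k, ‖b k‖ ^ r * v k ^ r) ^ (1 / r)) ∧
    ((∀ k, m k = 1) → (∀ k, v k = 1) → ∀ a b : (Fin d → ℤ) → ℂ,
        Summable (fun k => ‖a k‖ ^ r * m k ^ r) →
        Summable (fun k => ‖b k‖ ^ r * v k ^ r) →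
        (∑' k, ‖∑' j, a (k - j) * b j‖ ^ r * m k ^ r) ^ (1 / r) ≤
          (∑' k, ‖a k‖ ^ r * m k ^ r) ^ (1 / r) *
            (∑' k, ‖b k‖ ^ r * v k ^ r) ^ (1 / r)) := by
  have hv : ∀ k, 0 ≤ v k := fun k => (hv_pos k).le
  have hCm : 0 < Cm := pos_of_moderate hv hm_pos hmod
  have hsum_nonneg : ∀ (w : (Fin d → ℤ) → ℝ) (c : (Fin d → ℤ) → ℂ), (∀ k, 0 < w k) →
      0 ≤ ∑' k, ‖c k‖ ^ r * w k ^ r :=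
    fun w c hw => tsum_nonneg fun k => by have := hw k; positivity
  refine ⟨⟨Cm, hCm, fun a b ha hb => ?_⟩, fun hm1 hv1 a b ha hb => ?_⟩
  · obtain ⟨hsum, hle⟩ :=
      summable_and_tsum_norm_tsum_sub_mul_rpow_le hr0 hr1.le hCm.le hv hm_pos hmod a b ha hb
    exact ⟨hsum, Real.rpow_one_div_le_mul_of_le_rpow_mul hr0 hCm.le (hsum_nonneg m _ hm_pos)
      (hsum_nonneg m a hm_pos) (hsum_nonneg v b hv_pos) hle⟩
  · have hmod1 : ∀ j k, m (j + k) ≤ 1 * v j * m k := by simp [hm1, hv1]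
    obtain ⟨-, hle⟩ :=
      summable_and_tsum_norm_tsum_sub_mul_rpow_le hr0 hr1.le zero_le_one hv hm_pos hmod1 a b ha hb
    simpa using Real.rpow_one_div_le_mul_of_le_rpow_mul hr0 zero_le_one (hsum_nonneg m _ hm_pos)
      (hsum_nonneg m a hm_pos) (hsum_nonneg v b hv_pos) hle

/-- Young's inequality in the quasi-Banach range `0 < r < 1`: for a submultiplicative
weight `v` and a `v`-moderate weight `m` on `ℤ^d`, `ℓ^r_m ∗ ℓ^r_v ⊆ ℓ^r_m` with
`‖a∗b‖_{ℓ^r_m} ≤ C ‖a‖_{ℓ^r_m} ‖b‖_{ℓ^r_v}`, where `C` depends only on `m` and `v`,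
and `C = 1` when `m ≡ v ≡ 1`. -/
theorem young_quasi (d : ℕ) (r : ℝ) (hr0 : 0 < r) (hr1 : r < 1)
    (v m : (Fin d → ℤ) → ℝ) (hv_pos : ∀ k, 0 < v k) (hm_pos : ∀ k, 0 < m k)
    (hsub : ∀ j k, v (j + k) ≤ v j * v k)
    (Cm : ℝ) (hmod : ∀ j k, m (j + k) ≤ Cm * v j * m k) :
    (∃ C > 0, ∀ a b : (Fin d → ℤ) → ℂ,
        Summable (fun k => ‖a k‖ ^ r * m k ^ r) →
        Summable (fun k => ‖b k‖ ^ r * v k ^ r) →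
        Summable (fun k => ‖∑' j, a (k - j) * b j‖ ^ r * m k ^ r) ∧
          (∑' k, ‖∑' j, a (k - j) * b j‖ ^ r * m k ^ r) ^ (1 / r) ≤
            C * (∑' k, ‖a k‖ ^ r * m k ^ r) ^ (1 / r) *
              (∑' k, ‖b k‖ ^ r * v k ^ r) ^ (1 / r)) ∧
    ((∀ k, m k = 1) → (∀ k, v k = 1) → ∀ a b : (Fin d → ℤ) → ℂ,
        Summable (fun k => ‖a k‖ ^ r * m k ^ r) →
        Summable (fun k => ‖b k‖ ^ r * v k ^ r) →
        (∑' k, ‖∑' j, a (k - j) * b j‖ ^ r * m k ^ r) ^ (1 / r) ≤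
          (∑' k, ‖a k‖ ^ r * m k ^ r) ^ (1 / r) *
            (∑' k, ‖b k‖ ^ r * v k ^ r) ^ (1 / r)) :=
  young_quasi_general d r hr0 hr1 v m hv_pos hm_pos Cm hmod
end

section
/- In a quasi-Banach algebra A whose quasi-norm is a q-norm (0 < q ≤ 1) with multiplicative constant C_P (‖xy‖ ≤ C_P‖x‖‖y‖) and unit e with ‖e‖ = 1: if x ∈ A satisfies ‖x‖ < 1/C_P, then e − x is invertible in A, its inverse s = ∑_{n≥0} x^n satisfies ‖s − e − x‖ ≤ C_P²‖x‖²/(1 − (C_P‖x‖)^q)^{1/q}, and |φ(x)| < 1 for every complex homomorphism φ : A → ℂ. -/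
/-- A quasi-Banach algebra structure on a complete metric ring `A`: the quasi-norm `N`
is a `q`-norm (`0 < q ≤ 1`), is multiplicative up to the constant `C_P ≥ 1`,
`‖e‖ = 1`, and the metric is induced by `N (x - y) ^ q`. -/
class QuasiBanachAlgebra (A : Type*) [Ring A] [Algebra ℂ A] [MetricSpace A] [CompleteSpace A]
    (N : A → ℝ) (q Cp : ℝ) : Prop where
  q_pos : 0 < q
  q_le_one : q ≤ 1
  one_le_Cp : 1 ≤ Cp
  nonneg : ∀ x, 0 ≤ N x
  eq_zero_iff : ∀ x, N x = 0 ↔ x = 0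
  smul_eq : ∀ (c : ℂ) (x : A), N (c • x) = ‖c‖ * N x
  add_pow_le : ∀ x y, N (x + y) ^ q ≤ N x ^ q + N y ^ q
  mul_le : ∀ x y, N (x * y) ≤ Cp * N x * N y
  norm_one : N 1 = 1
  dist_eq : ∀ x y, dist x y = N (x - y) ^ q

/-!
With `r = (C_P ‖x‖)^q < 1`, submultiplicativity gives `‖xⁿ‖^q ≤ rⁿ`, so the partial sums of
`∑ xⁿ` are Cauchy for the metric `‖a - b‖^q` and converge to some `s`. Multiplication by a fixed
element is Lipschitz for that metric, so `(1 - x) s = s (1 - x) = 1` follows from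
`(1 - x) ∑_{i<n} xⁱ = 1 - xⁿ`. The `q`-triangle inequality bounds `‖∑_{2≤i<n} xⁱ‖^q` by
`r² / (1 - r)`, and this survives the limit since closed balls are closed. Finally, if
`|φ(x)| ≥ 1` then `y = φ(x)⁻¹ x` is again small, so `1 - y` is a unit killed by `φ`, which is
impossible.
-/

open Filter Finset Topology

theorem Real.le_div_rpow_of_rpow_le {a c q : ℝ} (hq : 0 < q) (ha : 0 ≤ a) (hc : 0 ≤ c)
    (hcq : c ^ q < 1) (h : a ^ q ≤ (c ^ q) ^ 2 / (1 - c ^ q)) :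
    a ≤ c ^ 2 / (1 - c ^ q) ^ (1 / q) := by
  have hsub : 0 < 1 - c ^ q := sub_pos.2 hcq
  rw [← Real.rpow_le_rpow_iff ha (by positivity) hq, Real.div_rpow (by positivity) (by positivity),
    ← Real.rpow_mul hsub.le, one_div_mul_cancel hq.ne', Real.rpow_one, ← Real.rpow_pow_comm hc]
  exact h

namespace QuasiBanachAlgebra

variable {A : Type*} [Ring A] [Algebra ℂ A] [MetricSpace A] [CompleteSpace A]
  {N : A → ℝ} {q Cp : ℝ}

theorem cp_pos (hA : QuasiBanachAlgebra A N q Cp) : 0 < Cp :=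
  one_pos.trans_le hA.one_le_Cp

theorem norm_zero (hA : QuasiBanachAlgebra A N q Cp) : N 0 = 0 :=
  (hA.eq_zero_iff 0).2 rfl

theorem norm_neg (hA : QuasiBanachAlgebra A N q Cp) (a : A) : N (-a) = N a := by
  rw [← neg_one_smul ℂ a, hA.smul_eq, _root_.norm_neg, NormOneClass.norm_one, one_mul]

theorem norm_pow_le (hA : QuasiBanachAlgebra A N q Cp) (x : A) (n : ℕ) :
    N (x ^ n) ≤ (Cp * N x) ^ n := by
  induction n with
  | zero => simp [hA.norm_one]
  | succ n ih =>
    calc N (x ^ (n + 1)) = N (x * x ^ n) := by rw [pow_succ']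
      _ ≤ Cp * N x * N (x ^ n) := hA.mul_le _ _
      _ ≤ Cp * N x * (Cp * N x) ^ n :=
        mul_le_mul_of_nonneg_left ih (mul_nonneg hA.cp_pos.le (hA.nonneg x))
      _ = (Cp * N x) ^ (n + 1) := (pow_succ' _ _).symm

theorem rpow_norm_pow_le (hA : QuasiBanachAlgebra A N q Cp) (x : A) (n : ℕ) :
    N (x ^ n) ^ q ≤ ((Cp * N x) ^ q) ^ n := by
  rw [Real.rpow_pow_comm (mul_nonneg hA.cp_pos.le (hA.nonneg x))]
  exact Real.rpow_le_rpow (hA.nonneg _) (hA.norm_pow_le x n) hA.q_pos.le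

theorem rpow_norm_sum_le {ι : Type*} (hA : QuasiBanachAlgebra A N q Cp) (s : Finset ι)
    (f : ι → A) : N (∑ i ∈ s, f i) ^ q ≤ ∑ i ∈ s, N (f i) ^ q := by
  induction s using Finset.cons_induction with
  | empty => simp [hA.norm_zero, Real.zero_rpow hA.q_pos.ne']
  | cons a s ha ih =>
    rw [sum_cons, sum_cons]
    exact (hA.add_pow_le _ _).trans (add_le_add_right ih _)

theorem rpow_norm_mul_le (hA : QuasiBanachAlgebra A N q Cp) (a b : A) :
    N (a * b) ^ q ≤ Cp ^ q * N a ^ q * N b ^ q := by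
  rw [← Real.mul_rpow hA.cp_pos.le (hA.nonneg a),
    ← Real.mul_rpow (mul_nonneg hA.cp_pos.le (hA.nonneg a)) (hA.nonneg b)]
  exact Real.rpow_le_rpow (hA.nonneg _) (hA.mul_le a b) hA.q_pos.le

theorem continuous_mul_left (hA : QuasiBanachAlgebra A N q Cp) (a : A) :
    Continuous (a * ·) :=
  LipschitzWith.continuous (K := (Cp ^ q * N a ^ q).toNNReal) <|
    LipschitzWith.of_dist_le' fun b c => by
      simpa only [hA.dist_eq, ← mul_sub] using hA.rpow_norm_mul_le a (b - c)

theorem continuous_mul_right (hA : QuasiBanachAlgebra A N q Cp) (a : A) :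
    Continuous (· * a) :=
  LipschitzWith.continuous (K := (Cp ^ q * N a ^ q).toNNReal) <|
    LipschitzWith.of_dist_le' fun b c => by
      simp only [hA.dist_eq, ← sub_mul]
      linarith [hA.rpow_norm_mul_le (b - c) a]

section Neumann

variable {x : A}

theorem cauchySeq_geom_sum (hA : QuasiBanachAlgebra A N q Cp) (hx : Cp * N x < 1) :
    CauchySeq fun n => ∑ i ∈ range n, x ^ i := by
  refine cauchySeq_of_le_geometric _ 1
    (Real.rpow_lt_one (mul_nonneg hA.cp_pos.le (hA.nonneg x)) hx hA.q_pos) fun n => ?_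
  rw [hA.dist_eq, sum_range_succ, sub_add_cancel_left, hA.norm_neg, one_mul]
  exact hA.rpow_norm_pow_le x n

theorem tendsto_one_sub_pow (hA : QuasiBanachAlgebra A N q Cp) (hx : Cp * N x < 1) :
    Tendsto (fun n => 1 - x ^ n) atTop (𝓝 1) := by
  have hr := mul_nonneg hA.cp_pos.le (hA.nonneg x)
  rw [tendsto_iff_dist_tendsto_zero]
  refine squeeze_zero (fun _ => dist_nonneg) (fun n => ?_)
    (tendsto_pow_atTop_nhds_zero_of_lt_one (Real.rpow_nonneg hr q)
      (Real.rpow_lt_one hr hx hA.q_pos))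
  rw [hA.dist_eq, sub_sub_cancel_left, hA.norm_neg]
  exact hA.rpow_norm_pow_le x n

def unitOneSub (hA : QuasiBanachAlgebra A N q Cp) (hx : Cp * N x < 1) {s : A}
    (hs : Tendsto (fun n => ∑ i ∈ range n, x ^ i) atTop (𝓝 s)) : Aˣ where
  val := 1 - x
  inv := s
  val_inv := tendsto_nhds_unique (((hA.continuous_mul_left _).tendsto s).comp hs)
    (by simpa only [Function.comp_def, mul_neg_geom_sum] using hA.tendsto_one_sub_pow hx)
  inv_val := tendsto_nhds_unique (((hA.continuous_mul_right _).tendsto s).comp hs)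
    (by simpa only [Function.comp_def, geom_sum_mul_neg] using hA.tendsto_one_sub_pow hx)

theorem rpow_norm_geom_sum_sub_le (hA : QuasiBanachAlgebra A N q Cp) (hx : Cp * N x < 1)
    (n : ℕ) :
    N (∑ i ∈ range (n + 2), x ^ i - 1 - x) ^ q ≤
      ((Cp * N x) ^ q) ^ 2 / (1 - (Cp * N x) ^ q) := by
  set r := (Cp * N x) ^ q
  have hr : 0 ≤ r := Real.rpow_nonneg (mul_nonneg hA.cp_pos.le (hA.nonneg x)) q
  have hr1 : r < 1 := Real.rpow_lt_one (mul_nonneg hA.cp_pos.le (hA.nonneg x)) hx hA.q_pos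
  have htail : ∑ i ∈ range (n + 2), x ^ i - 1 - x = ∑ i ∈ range n, x ^ (i + 2) := by
    simp only [sum_range_succ', zero_add, pow_one, pow_zero]
    abel
  calc N (∑ i ∈ range (n + 2), x ^ i - 1 - x) ^ q
      ≤ ∑ i ∈ range n, r ^ (i + 2) := by
        rw [htail]
        exact (hA.rpow_norm_sum_le _ _).trans (sum_le_sum fun i _ => hA.rpow_norm_pow_le x _)
    _ = r ^ 2 * ∑ i ∈ Ico 0 n, r ^ i := by
        rw [← range_eq_Ico, mul_sum]
        simp only [pow_add, mul_comm]
    _ ≤ r ^ 2 * (r ^ 0 / (1 - r)) := by gcongr; exact geom_sum_Ico_le_of_lt_one hr hr1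
    _ = r ^ 2 / (1 - r) := by ring

theorem rpow_norm_sub_one_sub_le (hA : QuasiBanachAlgebra A N q Cp) (hx : Cp * N x < 1) {s : A}
    (hs : Tendsto (fun n => ∑ i ∈ range n, x ^ i) atTop (𝓝 s)) :
    N (s - 1 - x) ^ q ≤ ((Cp * N x) ^ q) ^ 2 / (1 - (Cp * N x) ^ q) := by
  have hball : s ∈ Metric.closedBall (1 + x) (((Cp * N x) ^ q) ^ 2 / (1 - (Cp * N x) ^ q)) :=
    Metric.isClosed_closedBall.mem_of_tendsto (hs.comp (tendsto_add_atTop_nat 2))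
      (Eventually.of_forall fun n => by
        rw [Function.comp_apply, Metric.mem_closedBall, hA.dist_eq, ← sub_sub]
        exact hA.rpow_norm_geom_sum_sub_le hx n)
  rwa [Metric.mem_closedBall, hA.dist_eq, ← sub_sub] at hball

theorem isUnit_one_sub (hA : QuasiBanachAlgebra A N q Cp) (hx : Cp * N x < 1) :
    IsUnit (1 - x) :=
  let ⟨_, hs⟩ := cauchySeq_tendsto_of_complete (hA.cauchySeq_geom_sum hx)
  (hA.unitOneSub hx hs).isUnit

theorem norm_inverse_one_sub_sub_le (hA : QuasiBanachAlgebra A N q Cp) (hx : Cp * N x < 1) :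
    N (Ring.inverse (1 - x) - 1 - x) ≤ Cp ^ 2 * N x ^ 2 / (1 - (Cp * N x) ^ q) ^ (1 / q) := by
  obtain ⟨s, hs⟩ := cauchySeq_tendsto_of_complete (hA.cauchySeq_geom_sum hx)
  have hinv : Ring.inverse (1 - x) = s := Ring.inverse_unit (hA.unitOneSub hx hs)
  have hr := mul_nonneg hA.cp_pos.le (hA.nonneg x)
  rw [hinv, ← mul_pow]
  exact Real.le_div_rpow_of_rpow_le hA.q_pos (hA.nonneg _) hr
    (Real.rpow_lt_one hr hx hA.q_pos) (hA.rpow_norm_sub_one_sub_le hx hs)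

end Neumann

theorem _root_.LinearMap.map_one_of_map_mul {R B : Type*} [CommRing R] [IsDomain R] [Ring B] [Module R B]
    (φ : B →ₗ[R] R) (hmul : ∀ a b, φ (a * b) = φ a * φ b) (hφ : φ ≠ 0) : φ 1 = 1 := by
  obtain ⟨a, ha⟩ : ∃ a, φ a ≠ 0 := by
    by_contra! h
    exact hφ (LinearMap.ext h)
  exact mul_left_cancel₀ ha (by rw [← hmul, mul_one, mul_one])

theorem norm_apply_lt_one (hA : QuasiBanachAlgebra A N q Cp) {x : A} (hx : Cp * N x < 1)
    (φ : A →ₗ[ℂ] ℂ) (hmul : ∀ a b, φ (a * b) = φ a * φ b) (hφ : φ ≠ 0) : ‖φ x‖ < 1 := by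
  have h1 := φ.map_one_of_map_mul hmul hφ
  set ψ := AlgHom.ofLinearMap φ h1 hmul
  by_contra! h
  have hφx : φ x ≠ 0 := norm_pos_iff.1 (one_pos.trans_le h)
  have hy : Cp * N ((φ x)⁻¹ • x) < 1 := by
    rw [hA.smul_eq, norm_inv, mul_left_comm]
    exact (mul_le_of_le_one_left (mul_nonneg hA.cp_pos.le (hA.nonneg x))
      (inv_le_one_of_one_le₀ h)).trans_lt hx
  refine ((hA.isUnit_one_sub hy).map ψ).ne_zero ?_
  simp [ψ, h1, hφx]

end QuasiBanachAlgebra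

/-- Neumann series in a quasi-Banach algebra: if `‖x‖ < 1/C_P` then `e - x` is
invertible, its inverse `s` satisfies
`‖s - e - x‖ ≤ C_P²‖x‖²/(1-(C_P‖x‖)^q)^{1/q}`, and `|φ(x)| < 1` for every
complex homomorphism `φ`. -/
theorem neumann_quasiBanach (A : Type*) [Ring A] [Algebra ℂ A] [MetricSpace A]
    [CompleteSpace A] (N : A → ℝ) (q Cp : ℝ) [QuasiBanachAlgebra A N q Cp]
    (x : A) (hx : N x < 1 / Cp) :
    IsUnit (1 - x) ∧
      N (Ring.inverse (1 - x) - 1 - x) ≤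
        Cp ^ 2 * N x ^ 2 / (1 - (Cp * N x) ^ q) ^ (1 / q) ∧
      ∀ φ : A →ₗ[ℂ] ℂ, (∀ a b, φ (a * b) = φ a * φ b) → φ ≠ 0 → ‖φ x‖ < 1 := by
  have hA : QuasiBanachAlgebra A N q Cp := inferInstance
  have hx' : Cp * N x < 1 := (lt_div_iff₀' hA.cp_pos).1 hx
  exact ⟨hA.isUnit_one_sub hx', hA.norm_inverse_one_sub_sub_le hx',
    fun φ hmul hφ => hA.norm_apply_lt_one hx' φ hmul hφ⟩
end

section
/- Gelfand–Mazur for quasi-Banach algebras: if A is a quasi-Banach algebra in which every nonzero element is invertible, then A is isomorphic to ℂ as an algebra (via an isometric isomorphism when ‖e‖ = 1). -/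
/-!
It suffices that every `x` has a spectral value `c`: then `x - c` is not invertible, hence zero.
Liouville's theorem is not available (a quasi-Banach space may have no nonzero continuous
functionals), so it is replaced by a maximum principle for `s c = ρ ((c - x)⁻¹)`, where `ρ` is the
spectral radius built from the submultiplicative `q`-homogeneous seminorm `(Cp * N) ^ q`. On
commuting elements `ρ` is subadditive and submultiplicative, so if the spectrum were empty, the
resolvent identity would make `s` continuous; `s` is positive and tends to `0` at infinity, hence
attains a maximum `t` at some `d`. Factoring `(d - x) ^ n - (-μ) ^ n` over the `n`-th roots of
unity gives `t ≤ s (d + μ) * (1 + (‖μ‖ ^ q * t) ^ n)`, so `{c | s c = t}` is open as well as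
closed, hence all of `ℂ`, contradicting `s → 0`.
-/

open Filter Topology

section GrowthRate

/-- For submultiplicative `u` this is `lim u n ^ (1 / n)` (Fekete); taking the infimum avoids
having to know that the limit exists. -/
noncomputable def growthRate (u : ℕ → ℝ) : ℝ :=
  ⨅ n : ℕ, u (n + 1) ^ ((n + 1 : ℕ) : ℝ)⁻¹

variable {u : ℕ → ℝ}

theorem growthRate_nonneg (hu : ∀ n, 0 ≤ u n) : 0 ≤ growthRate u :=
  le_ciInf fun _ => Real.rpow_nonneg (hu _) _

theorem growthRate_le (hu : ∀ n, 0 ≤ u n) {n : ℕ} (hn : n ≠ 0) :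
    growthRate u ≤ u n ^ (n : ℝ)⁻¹ := by
  obtain ⟨m, rfl⟩ := Nat.exists_eq_succ_of_ne_zero hn
  exact ciInf_le ⟨0, by rintro _ ⟨k, rfl⟩; exact Real.rpow_nonneg (hu _) _⟩ m

theorem le_growthRate {b : ℝ} (h : ∀ n ≠ 0, b ≤ u n ^ (n : ℝ)⁻¹) : b ≤ growthRate u :=
  le_ciInf fun n => h (n + 1) n.succ_ne_zero

theorem growthRate_pow_mul {k : ℝ} (hk : 0 ≤ k) (hu : ∀ n, 0 ≤ u n) :
    growthRate (fun n => k ^ n * u n) = k * growthRate u := by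
  rw [growthRate, growthRate, Real.mul_iInf_of_nonneg hk]
  congr 1 with n
  rw [Real.mul_rpow (pow_nonneg hk _) (hu _), Real.pow_rpow_inv_natCast hk n.succ_ne_zero]

theorem growthRate_le_of_le_mul_pow (hu : ∀ n, 0 ≤ u n) {C a : ℝ} (hC : 0 < C) (ha : 0 ≤ a)
    (h : ∀ n, u n ≤ C * a ^ n) : growthRate u ≤ a := by
  have hlim : Tendsto (fun n : ℕ => C ^ (n : ℝ)⁻¹ * a) atTop (𝓝 a) := by
    simpa using ((tendsto_const_nhds (x := C)).rpow
      (tendsto_inv_atTop_zero.comp tendsto_natCast_atTop_atTop) (Or.inl hC.ne')).mul_const a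
  refine ge_of_tendsto hlim ((eventually_ne_atTop 0).mono fun n hn => ?_)
  calc growthRate u ≤ u n ^ (n : ℝ)⁻¹ := growthRate_le hu hn
    _ ≤ (C * a ^ n) ^ (n : ℝ)⁻¹ := Real.rpow_le_rpow (hu n) (h n) (by positivity)
    _ = C ^ (n : ℝ)⁻¹ * a := by
      rw [Real.mul_rpow hC.le (pow_nonneg ha n), Real.pow_rpow_inv_natCast ha hn]

theorem exists_le_mul_pow_of_le_pow (hu : ∀ n, 0 ≤ u n) (hmul : ∀ m n, u (m + n) ≤ u m * u n)
    {p : ℕ} (hp : 0 < p) {a : ℝ} (ha : 0 < a) (hup : u p ≤ a ^ p) :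
    ∃ C > 0, ∀ n, u n ≤ C * a ^ n := by
  set C := 1 + ∑ r ∈ Finset.range p, u r / a ^ r
  have hterm : ∀ r, 0 ≤ u r / a ^ r := fun r => div_nonneg (hu r) (pow_nonneg ha.le r)
  have hC : 0 < C := add_pos_of_pos_of_nonneg one_pos (Finset.sum_nonneg fun r _ => hterm r)
  have hsmall : ∀ r < p, u r ≤ C * a ^ r := fun r hr => by
    rw [← div_le_iff₀ (pow_pos ha r)]
    exact (Finset.single_le_sum (fun r _ => hterm r) (Finset.mem_range.2 hr)).trans
      (le_add_of_nonneg_left zero_le_one)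
  have hblock : ∀ j r, u (p * j + r) ≤ a ^ (p * j) * u r := by
    intro j r
    induction j with
    | zero => simp
    | succ j ih =>
      calc u (p * (j + 1) + r) = u (p + (p * j + r)) := by ring_nf
        _ ≤ u p * u (p * j + r) := hmul _ _
        _ ≤ a ^ p * (a ^ (p * j) * u r) := by gcongr; exact hu _
        _ = a ^ (p * (j + 1)) * u r := by ring
  refine ⟨C, hC, fun n => ?_⟩
  calc u n = u (p * (n / p) + n % p) := by rw [Nat.div_add_mod]
    _ ≤ a ^ (p * (n / p)) * (C * a ^ (n % p)) :=
      (hblock _ _).trans (mul_le_mul_of_nonneg_left (hsmall _ (Nat.mod_lt n hp)) (by positivity))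
    _ = C * a ^ n := by rw [← mul_left_comm, ← pow_add, Nat.div_add_mod]

theorem exists_le_mul_pow_of_growthRate_lt (hu : ∀ n, 0 ≤ u n)
    (hmul : ∀ m n, u (m + n) ≤ u m * u n) {a : ℝ} (ha : growthRate u < a) :
    ∃ C > 0, ∀ n, u n ≤ C * a ^ n := by
  have ha0 : 0 < a := (growthRate_nonneg hu).trans_lt ha
  obtain ⟨p, hp⟩ := exists_lt_of_ciInf_lt ha
  refine exists_le_mul_pow_of_le_pow hu hmul p.succ_pos ha0 ?_
  calc u (p + 1) = (u (p + 1) ^ ((p + 1 : ℕ) : ℝ)⁻¹) ^ (p + 1) :=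
        (Real.rpow_inv_natCast_pow (hu _) p.succ_ne_zero).symm
    _ ≤ a ^ (p + 1) := pow_le_pow_left₀ (Real.rpow_nonneg (hu _) _) hp.le _

end GrowthRate

theorem le_of_forall_lt_imp_le_of_continuous {f : ℝ → ℝ → ℝ} (hf : Continuous (Function.uncurry f))
    {r a b : ℝ} (h : ∀ a' b', a < a' → b < b' → r ≤ f a' b') : r ≤ f a b := by
  have hlim : Tendsto (fun ε => f (a + ε) (b + ε)) (𝓝[>] 0) (𝓝 (f a b)) := by
    have : Continuous fun ε => f (a + ε) (b + ε) :=
      hf.comp (by fun_prop : Continuous fun ε : ℝ => (a + ε, b + ε))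
    simpa using (this.tendsto 0).mono_left nhdsWithin_le_nhds
  exact ge_of_tendsto hlim (eventually_nhdsWithin_of_forall fun ε (hε : 0 < ε) =>
    h _ _ (lt_add_of_pos_right a hε) (lt_add_of_pos_right b hε))

theorem continuous_of_le_add_dist_rpow_mul {X : Type*} [PseudoMetricSpace X] {f : X → ℝ} {q : ℝ}
    (hq : 0 < q) (hf0 : ∀ c, 0 ≤ f c) (hf : ∀ c d, f c ≤ f d + dist c d ^ q * (f c * f d)) :
    Continuous f := by
  refine continuous_iff_continuousAt.2 fun d => ?_
  have hε : Tendsto (fun c => dist c d ^ q) (𝓝 d) (𝓝 0) := by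
    have : Continuous fun c => dist c d ^ q :=
      (continuous_id.dist continuous_const).rpow_const fun _ => Or.inr hq.le
    simpa [Real.zero_rpow hq.ne'] using this.tendsto d
  have hsmall : ∀ᶠ c in 𝓝 d, dist c d ^ q * f d ≤ 1 / 2 := by
    have : Tendsto (fun c => dist c d ^ q * f d) (𝓝 d) (𝓝 0) := by simpa using hε.mul_const (f d)
    exact this.eventually (ge_mem_nhds one_half_pos)
  have hbound : ∀ᶠ c in 𝓝 d, |f c - f d| ≤ dist c d ^ q * (2 * f d * f d) := by
    filter_upwards [hsmall] with c hc
    have hεc : 0 ≤ dist c d ^ q := Real.rpow_nonneg dist_nonneg q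
    have hfc : f c ≤ 2 * f d := by nlinarith [hf c d, hf0 c]
    have hprod : dist c d ^ q * (f c * f d) ≤ dist c d ^ q * (2 * f d * f d) := by
      gcongr; exact hf0 d
    rw [abs_le]
    constructor
    · have hdc := hf d c
      rw [dist_comm, mul_comm (f d)] at hdc
      linarith
    · linarith [hf c d]
  have hlim : Tendsto (fun c => dist c d ^ q * (2 * f d * f d)) (𝓝 d) (𝓝 0) := by
    simpa using hε.mul_const (2 * f d * f d)
  exact tendsto_iff_norm_sub_tendsto_zero.2 (squeeze_zero' (Eventually.of_forall fun _ =>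
    norm_nonneg _) hbound hlim)

theorem spectrum.resolvent_eq_add_smul {A : Type*} [Ring A] [Algebra ℂ A] {x : A} {c d : ℂ}
    (hc : IsUnit (algebraMap ℂ A c - x)) (hd : IsUnit (algebraMap ℂ A d - x)) :
    resolvent x c = resolvent x d + (d - c) • (resolvent x c * resolvent x d) := by
  have h1 : resolvent x c * (algebraMap ℂ A c - x) = 1 := Ring.inverse_mul_cancel _ hc
  have h2 : (algebraMap ℂ A d - x) * resolvent x d = 1 := Ring.mul_inverse_cancel _ hd
  calc resolvent x c = resolvent x c * ((algebraMap ℂ A d - x) * resolvent x d) := by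
        rw [h2, mul_one]
    _ = resolvent x c * (algebraMap ℂ A c - x) * resolvent x d +
        resolvent x c * algebraMap ℂ A (d - c) * resolvent x d := by
        rw [map_sub]; noncomm_ring
    _ = resolvent x d + (d - c) • (resolvent x c * resolvent x d) := by
        rw [h1, one_mul, Algebra.smul_def, ← Algebra.commutes, mul_assoc]

open Polynomial in
theorem pow_sub_algebraMap_pow_eq_prod {K B : Type*} [Field K] [CommRing B] [Algebra K B]
    {ζ : K} {n : ℕ} (hζ : IsPrimitiveRoot ζ n) (hn : 0 < n) (a : B) (μ : K) :
    a ^ n - algebraMap K B (μ ^ n) = ∏ i ∈ Finset.range n, (a - algebraMap K B (ζ ^ i * μ)) := by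
  simpa [map_prod] using congrArg (aeval a) (X_pow_sub_C_eq_prod hζ hn rfl)

theorem spectrum.resolvent_pow_eq_prod_mul {B : Type*} [CommRing B] [Algebra ℂ B] {x : B}
    (hx : ∀ c : ℂ, IsUnit (algebraMap ℂ B c - x)) {ζ : ℂ} {n : ℕ} (hζ : IsPrimitiveRoot ζ n)
    (hn : 0 < n) (d μ : ℂ) :
    resolvent x d ^ n = (∏ i ∈ Finset.range n, resolvent x (d + ζ ^ i * μ)) *
      (1 + (-(-μ) ^ n) • resolvent x d ^ n) := by
  set P := ∏ i ∈ Finset.range n, resolvent x (d + ζ ^ i * μ)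
  have hinv : ∀ c, (algebraMap ℂ B c - x) * resolvent x c = 1 :=
    fun c => Ring.mul_inverse_cancel _ (hx c)
  have hVP : ((algebraMap ℂ B d - x) ^ n - algebraMap ℂ B ((-μ) ^ n)) * P = 1 := by
    rw [pow_sub_algebraMap_pow_eq_prod hζ hn, ← Finset.prod_mul_distrib]
    refine Finset.prod_eq_one fun i _ => ?_
    convert hinv (d + ζ ^ i * μ) using 2
    simp only [map_add, map_mul, map_neg]
    ring
  have hpow : (algebraMap ℂ B d - x) ^ n * resolvent x d ^ n = 1 := by
    rw [← mul_pow, hinv, one_pow]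
  rw [Algebra.smul_def, map_neg]
  linear_combination (-resolvent x d ^ n) * hVP + P * hpow

theorem Subalgebra.isUnit_of_isUnit_coe_centralizer {R A : Type*} [CommSemiring R] [Ring A]
    [Algebra R A] {s : Set A} {a : Subalgebra.centralizer R s} (ha : IsUnit (a : A)) :
    IsUnit a := by
  obtain ⟨u, hu⟩ := ha
  have hinv : (↑u⁻¹ : A) ∈ Subalgebra.centralizer R s := fun g hg => by
    have : Commute g u := hu ▸ (a.2 g hg)
    exact this.units_inv_right.eq
  exact ⟨⟨a, ⟨_, hinv⟩, Subtype.ext (by simp [← hu]), Subtype.ext (by simp [← hu])⟩, rfl⟩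

structure IsSubmultiplicativeQSeminorm {A : Type*} [Ring A] [Algebra ℂ A] (ν : A → ℝ) (q : ℝ) :
    Prop where
  q_pos : 0 < q
  nonneg : ∀ x, 0 ≤ ν x
  add_le : ∀ x y, ν (x + y) ≤ ν x + ν y
  mul_le : ∀ x y, ν (x * y) ≤ ν x * ν y
  smul : ∀ (c : ℂ) x, ν (c • x) = ‖c‖ ^ q * ν x
  one_le : 1 ≤ ν 1

/-- For `ν = (Cp * N) ^ q` this is `r x ^ q`, where `r x = lim N (x ^ n) ^ (1 / n)` is the
spectral radius. -/
noncomputable def spectralRadiusOf {M : Type*} [Monoid M] (ν : M → ℝ) (x : M) : ℝ :=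
  growthRate fun n => ν (x ^ n)

namespace IsSubmultiplicativeQSeminorm

open spectrum

section Ring

variable {A : Type*} [Ring A] [Algebra ℂ A] {ν : A → ℝ} {q : ℝ}
  (hν : IsSubmultiplicativeQSeminorm ν q)
include hν

theorem map_zero : ν 0 = 0 := by
  simpa [Real.zero_rpow hν.q_pos.ne'] using hν.smul 0 0

theorem nontrivial : Nontrivial A :=
  nontrivial_of_ne 1 0 fun h => by linarith [hν.one_le, h ▸ hν.map_zero]

theorem map_nsmul_le (n : ℕ) (x : A) : ν (n • x) ≤ n * ν x := by
  induction n with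
  | zero => simp [hν.map_zero]
  | succ n ih =>
    rw [succ_nsmul, Nat.cast_succ, add_one_mul]
    exact (hν.add_le _ _).trans (by linarith)

theorem map_pow_add_le (x : A) (m n : ℕ) : ν (x ^ (m + n)) ≤ ν (x ^ m) * ν (x ^ n) :=
  pow_add x m n ▸ hν.mul_le _ _

theorem spectralRadiusOf_nonneg (x : A) : 0 ≤ spectralRadiusOf ν x :=
  growthRate_nonneg fun _ => hν.nonneg _

theorem spectralRadiusOf_le_map (x : A) : spectralRadiusOf ν x ≤ ν x := by
  simpa [spectralRadiusOf] using growthRate_le (fun n => hν.nonneg (x ^ n)) one_ne_zero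

theorem exists_map_pow_le {x : A} {a : ℝ} (ha : spectralRadiusOf ν x < a) :
    ∃ C > 0, ∀ n, ν (x ^ n) ≤ C * a ^ n :=
  exists_le_mul_pow_of_growthRate_lt (fun _ => hν.nonneg _) (hν.map_pow_add_le x) ha

theorem spectralRadiusOf_le_of_map_pow_le {x : A} {C a : ℝ} (hC : 0 < C) (ha : 0 ≤ a)
    (h : ∀ n, ν (x ^ n) ≤ C * a ^ n) : spectralRadiusOf ν x ≤ a :=
  growthRate_le_of_le_mul_pow (fun _ => hν.nonneg _) hC ha h

theorem spectralRadiusOf_one : spectralRadiusOf ν (1 : A) = 1 := by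
  refine le_antisymm (hν.spectralRadiusOf_le_of_map_pow_le (one_pos.trans_le hν.one_le) zero_le_one
    fun n => by simp) (le_growthRate fun n _ => ?_)
  simpa using Real.one_le_rpow hν.one_le (by positivity)

theorem spectralRadiusOf_smul (c : ℂ) (x : A) :
    spectralRadiusOf ν (c • x) = ‖c‖ ^ q * spectralRadiusOf ν x := by
  have h : ∀ n : ℕ, ν ((c • x) ^ n) = (‖c‖ ^ q) ^ n * ν (x ^ n) := fun n => by
    rw [smul_pow, hν.smul, norm_pow, Real.rpow_pow_comm (norm_nonneg c)]
  simp only [spectralRadiusOf, h]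
  exact growthRate_pow_mul (by positivity) fun _ => hν.nonneg _

theorem spectralRadiusOf_mul_le {x y : A} (h : Commute x y) :
    spectralRadiusOf ν (x * y) ≤ spectralRadiusOf ν x * spectralRadiusOf ν y := by
  refine le_of_forall_lt_imp_le_of_continuous (f := (· * ·)) continuous_mul fun a b ha hb => ?_
  obtain ⟨C, hC, hCx⟩ := hν.exists_map_pow_le ha
  obtain ⟨D, hD, hDy⟩ := hν.exists_map_pow_le hb
  have ha0 := (hν.spectralRadiusOf_nonneg x).trans ha.le
  have hb0 := (hν.spectralRadiusOf_nonneg y).trans hb.le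
  refine hν.spectralRadiusOf_le_of_map_pow_le (mul_pos hC hD) (mul_nonneg ha0 hb0) fun n => ?_
  calc ν ((x * y) ^ n) ≤ ν (x ^ n) * ν (y ^ n) := h.mul_pow n ▸ hν.mul_le _ _
    _ ≤ C * a ^ n * (D * b ^ n) :=
      mul_le_mul (hCx n) (hDy n) (hν.nonneg _) (by positivity)
    _ = C * D * (a * b) ^ n := by ring

theorem map_add_pow_le {x y : A} (h : Commute x y) {C D a b : ℝ}
    (hx : ∀ n, ν (x ^ n) ≤ C * a ^ n) (hy : ∀ n, ν (y ^ n) ≤ D * b ^ n) (n : ℕ) :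
    ν ((x + y) ^ n) ≤ C * D * (a + b) ^ n := by
  rw [h.add_pow', (Commute.all a b).add_pow', Finset.mul_sum]
  refine (Finset.le_sum_of_subadditive ν hν.map_zero.le hν.add_le _ _).trans
    (Finset.sum_le_sum fun m _ => ?_)
  calc ν (n.choose m.1 • (x ^ m.1 * y ^ m.2))
      ≤ n.choose m.1 * (ν (x ^ m.1) * ν (y ^ m.2)) :=
        (hν.map_nsmul_le _ _).trans (by gcongr; exact hν.mul_le _ _)
    _ ≤ n.choose m.1 * (C * a ^ m.1 * (D * b ^ m.2)) :=
        mul_le_mul_of_nonneg_left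
          (mul_le_mul (hx _) (hy _) (hν.nonneg _) ((hν.nonneg _).trans (hx _))) (Nat.cast_nonneg _)
    _ = C * D * (n.choose m.1 • (a ^ m.1 * b ^ m.2)) := by rw [nsmul_eq_mul]; ring

theorem spectralRadiusOf_add_le {x y : A} (h : Commute x y) :
    spectralRadiusOf ν (x + y) ≤ spectralRadiusOf ν x + spectralRadiusOf ν y := by
  refine le_of_forall_lt_imp_le_of_continuous (f := (· + ·)) continuous_add fun a b ha hb => ?_
  obtain ⟨C, hC, hCx⟩ := hν.exists_map_pow_le ha
  obtain ⟨D, hD, hDy⟩ := hν.exists_map_pow_le hb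
  have ha0 := (hν.spectralRadiusOf_nonneg x).trans ha.le
  have hb0 := (hν.spectralRadiusOf_nonneg y).trans hb.le
  exact hν.spectralRadiusOf_le_of_map_pow_le (mul_pos hC hD) (add_nonneg ha0 hb0)
    (hν.map_add_pow_le h hCx hDy)

theorem spectralRadiusOf_pow (x : A) (n : ℕ) :
    spectralRadiusOf ν (x ^ n) = spectralRadiusOf ν x ^ n := by
  refine le_antisymm ?_ ?_
  · induction n with
    | zero => simp [hν.spectralRadiusOf_one]
    | succ n ih =>
      rw [pow_succ, pow_succ]
      exact (hν.spectralRadiusOf_mul_le ((Commute.refl x).pow_left n)).trans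
        (mul_le_mul_of_nonneg_right ih (hν.spectralRadiusOf_nonneg x))
  · rcases eq_or_ne n 0 with rfl | hn
    · simp [hν.spectralRadiusOf_one]
    refine le_growthRate fun k hk => ?_
    have hx := growthRate_le (fun m => hν.nonneg (x ^ m)) (mul_ne_zero hn hk)
    have hnk := hν.nonneg (x ^ (n * k))
    calc spectralRadiusOf ν x ^ n ≤ (ν (x ^ (n * k)) ^ ((n * k : ℕ) : ℝ)⁻¹) ^ n :=
          pow_le_pow_left₀ (hν.spectralRadiusOf_nonneg x) hx n
      _ = ν ((x ^ n) ^ k) ^ (k : ℝ)⁻¹ := by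
        rw [← pow_mul, ← Real.rpow_natCast, ← Real.rpow_mul hnk]
        congr 1
        push_cast
        field_simp

theorem spectralRadiusOf_pos {x : A} (hx : IsUnit x) : 0 < spectralRadiusOf ν x := by
  obtain ⟨u, rfl⟩ := hx
  have h : 1 ≤ spectralRadiusOf ν (u : A) * spectralRadiusOf ν ↑u⁻¹ := by
    simpa [hν.spectralRadiusOf_one] using
      hν.spectralRadiusOf_mul_le (Commute.refl (u : A)).units_inv_right
  exact (hν.spectralRadiusOf_nonneg _).lt_of_ne fun h0 => by simp [← h0] at h; linarith

theorem norm_rpow_mul_map_resolvent_le {x : A} {c : ℂ} (hc : IsUnit (algebraMap ℂ A c - x))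
    (hcx : 2 * ν x ≤ ‖c‖ ^ q) : ‖c‖ ^ q * ν (resolvent x c) ≤ 2 * ν 1 := by
  have hR : c • resolvent x c = 1 + x * resolvent x c := by
    have h : (algebraMap ℂ A c - x) * resolvent x c = 1 := Ring.mul_inverse_cancel _ hc
    rw [sub_mul, ← Algebra.smul_def] at h
    exact eq_add_of_sub_eq h
  have h1 : ‖c‖ ^ q * ν (resolvent x c) ≤ ν 1 + ν x * ν (resolvent x c) := by
    rw [← hν.smul, hR]
    exact (hν.add_le _ _).trans (by gcongr; exact hν.mul_le _ _)
  nlinarith [mul_le_mul_of_nonneg_right hcx (hν.nonneg (resolvent x c))]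

theorem tendsto_spectralRadiusOf_resolvent_cocompact {x : A}
    (hx : ∀ c : ℂ, IsUnit (algebraMap ℂ A c - x)) :
    Tendsto (fun c => spectralRadiusOf ν (resolvent x c)) (cocompact ℂ) (𝓝 0) := by
  have hnorm : Tendsto (fun c : ℂ => ‖c‖ ^ q) (cocompact ℂ) atTop :=
    (tendsto_rpow_atTop hν.q_pos).comp tendsto_norm_cocompact_atTop
  have hlim : Tendsto (fun c : ℂ => 2 * ν 1 * (‖c‖ ^ q)⁻¹) (cocompact ℂ) (𝓝 0) := by
    simpa using hnorm.inv_tendsto_atTop.const_mul (2 * ν 1)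
  refine squeeze_zero' (Eventually.of_forall fun c => hν.spectralRadiusOf_nonneg _) ?_ hlim
  filter_upwards [hnorm.eventually_ge_atTop (2 * ν x), hnorm.eventually_gt_atTop 0] with c hcx hc0
  rw [← div_eq_mul_inv, le_div_iff₀ hc0, mul_comm]
  exact (mul_le_mul_of_nonneg_left (hν.spectralRadiusOf_le_map _) hc0.le).trans
    (hν.norm_rpow_mul_map_resolvent_le (hx c) hcx)

theorem comp {B : Type*} [Ring B] [Algebra ℂ B] (f : B →ₐ[ℂ] A) :
    IsSubmultiplicativeQSeminorm (ν ∘ f) q where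
  q_pos := hν.q_pos
  nonneg _ := hν.nonneg _
  add_le x y := by simpa using hν.add_le (f x) (f y)
  mul_le x y := by simpa using hν.mul_le (f x) (f y)
  smul c x := by simpa using hν.smul c (f x)
  one_le := by simpa using hν.one_le

end Ring

section CommRing

variable {B : Type*} [CommRing B] [Algebra ℂ B] {ν : B → ℝ} {q : ℝ}
  (hν : IsSubmultiplicativeQSeminorm ν q)
include hν

theorem spectralRadiusOf_prod_le {ι : Type*} (s : Finset ι) (f : ι → B) :
    spectralRadiusOf ν (∏ i ∈ s, f i) ≤ ∏ i ∈ s, spectralRadiusOf ν (f i) := by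
  classical
  induction s using Finset.induction_on with
  | empty => simp [hν.spectralRadiusOf_one]
  | insert i s hi ih =>
    rw [Finset.prod_insert hi, Finset.prod_insert hi]
    exact (hν.spectralRadiusOf_mul_le (Commute.all _ _)).trans
      (mul_le_mul_of_nonneg_left ih (hν.spectralRadiusOf_nonneg _))

section Resolvent

variable {x : B} (hx : ∀ c : ℂ, IsUnit (algebraMap ℂ B c - x))
include hx

theorem spectralRadiusOf_resolvent_le (c d : ℂ) :
    spectralRadiusOf ν (resolvent x c) ≤ spectralRadiusOf ν (resolvent x d) +
      dist c d ^ q * (spectralRadiusOf ν (resolvent x c) * spectralRadiusOf ν (resolvent x d)) := by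
  calc spectralRadiusOf ν (resolvent x c)
      = spectralRadiusOf ν (resolvent x d + (d - c) • (resolvent x c * resolvent x d)) :=
        congrArg _ (resolvent_eq_add_smul (hx c) (hx d))
    _ ≤ spectralRadiusOf ν (resolvent x d) +
        dist c d ^ q * spectralRadiusOf ν (resolvent x c * resolvent x d) := by
        rw [dist_comm, dist_eq_norm, ← hν.spectralRadiusOf_smul]
        exact hν.spectralRadiusOf_add_le (Commute.all _ _)
    _ ≤ _ := by
        gcongr
        exact hν.spectralRadiusOf_mul_le (Commute.all _ _)

/-- At a maximum `d`, every factor of `resolvent_pow_eq_prod_mul` except the one at `d + μ` has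
spectral radius at most that of `resolvent x d`. -/
theorem le_spectralRadiusOf_resolvent_add_mul {d : ℂ}
    (hd : ∀ c : ℂ, spectralRadiusOf ν (resolvent x c) ≤ spectralRadiusOf ν (resolvent x d))
    (μ : ℂ) (n : ℕ) :
    spectralRadiusOf ν (resolvent x d) ≤ spectralRadiusOf ν (resolvent x (d + μ)) *
      (1 + (‖μ‖ ^ q * spectralRadiusOf ν (resolvent x d)) ^ (n + 1)) := by
  set t := spectralRadiusOf ν (resolvent x d)
  have ht : 0 < t := hν.spectralRadiusOf_pos ((isUnit_resolvent (R := ℂ)).1 (hx d))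
  obtain ⟨ζ, hζ⟩ : ∃ ζ : ℂ, IsPrimitiveRoot ζ (n + 1) :=
    ⟨_, Complex.isPrimitiveRoot_exp (n + 1) n.succ_ne_zero⟩
  set P := ∏ i ∈ Finset.range (n + 1), resolvent x (d + ζ ^ i * μ)
  have hP : spectralRadiusOf ν P ≤ spectralRadiusOf ν (resolvent x (d + μ)) * t ^ n := by
    refine (hν.spectralRadiusOf_prod_le _ _).trans ?_
    rw [Finset.prod_range_succ', pow_zero, one_mul, mul_comm]
    refine mul_le_mul_of_nonneg_left ?_ (hν.spectralRadiusOf_nonneg _)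
    calc ∏ i ∈ Finset.range n, spectralRadiusOf ν (resolvent x (d + ζ ^ (i + 1) * μ))
        ≤ ∏ _i ∈ Finset.range n, t :=
          Finset.prod_le_prod (fun _ _ => hν.spectralRadiusOf_nonneg _) fun _ _ => hd _
      _ = t ^ n := by simp
  have hpert : spectralRadiusOf ν (1 + (-(-μ) ^ (n + 1)) • resolvent x d ^ (n + 1)) ≤
      1 + (‖μ‖ ^ q * t) ^ (n + 1) := by
    refine (hν.spectralRadiusOf_add_le (Commute.all _ _)).trans_eq ?_
    rw [hν.spectralRadiusOf_one, hν.spectralRadiusOf_smul, hν.spectralRadiusOf_pow, norm_neg,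
      norm_pow, norm_neg, mul_pow, ← Real.rpow_pow_comm (norm_nonneg μ)]
  have key : t ^ n * t ≤ t ^ n * (spectralRadiusOf ν (resolvent x (d + μ)) *
      (1 + (‖μ‖ ^ q * t) ^ (n + 1))) :=
    calc t ^ n * t = spectralRadiusOf ν (resolvent x d ^ (n + 1)) := by
          rw [hν.spectralRadiusOf_pow, pow_succ]
      _ = spectralRadiusOf ν (P * (1 + (-(-μ) ^ (n + 1)) • resolvent x d ^ (n + 1))) :=
          congrArg _ (resolvent_pow_eq_prod_mul hx hζ n.succ_pos d μ)
      _ ≤ spectralRadiusOf ν P *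
          spectralRadiusOf ν (1 + (-(-μ) ^ (n + 1)) • resolvent x d ^ (n + 1)) :=
          hν.spectralRadiusOf_mul_le (Commute.all _ _)
      _ ≤ spectralRadiusOf ν (resolvent x (d + μ)) * t ^ n * (1 + (‖μ‖ ^ q * t) ^ (n + 1)) :=
          mul_le_mul hP hpert (hν.spectralRadiusOf_nonneg _)
            (mul_nonneg (hν.spectralRadiusOf_nonneg _) (pow_nonneg ht.le n))
      _ = _ := by ring
  exact le_of_mul_le_mul_left key (pow_pos ht n)

theorem eventually_spectralRadiusOf_resolvent_eq {d : ℂ}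
    (hd : ∀ c : ℂ, spectralRadiusOf ν (resolvent x c) ≤ spectralRadiusOf ν (resolvent x d)) :
    ∀ᶠ c in 𝓝 d, spectralRadiusOf ν (resolvent x c) = spectralRadiusOf ν (resolvent x d) := by
  set t := spectralRadiusOf ν (resolvent x d)
  have hsmall : ∀ᶠ c in 𝓝 d, ‖c - d‖ ^ q * t < 1 := by
    have hcont : Continuous fun c : ℂ => ‖c - d‖ ^ q * t :=
      ((continuous_norm.comp (continuous_sub_right d)).rpow_const
        fun _ => Or.inr hν.q_pos.le).mul continuous_const
    have : Tendsto (fun c : ℂ => ‖c - d‖ ^ q * t) (𝓝 d) (𝓝 0) := by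
      simpa [Real.zero_rpow hν.q_pos.ne'] using hcont.tendsto d
    exact this.eventually (gt_mem_nhds one_pos)
  filter_upwards [hsmall] with c hc
  have hle := hν.le_spectralRadiusOf_resolvent_add_mul hx hd (c - d)
  rw [add_sub_cancel] at hle
  have hlim : Tendsto (fun n : ℕ => spectralRadiusOf ν (resolvent x c) *
      (1 + (‖c - d‖ ^ q * t) ^ (n + 1))) atTop (𝓝 (spectralRadiusOf ν (resolvent x c))) := by
    have hβ : 0 ≤ ‖c - d‖ ^ q * t :=
      mul_nonneg (Real.rpow_nonneg (norm_nonneg _) _) (hν.spectralRadiusOf_nonneg _)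
    simpa using ((tendsto_pow_atTop_nhds_zero_of_lt_one hβ hc).comp
      (tendsto_add_atTop_nat 1)).const_add 1 |>.const_mul (spectralRadiusOf ν (resolvent x c))
  exact le_antisymm (hd c) (ge_of_tendsto hlim (Eventually.of_forall hle))

end Resolvent

theorem spectrum_nonempty_of_comm (x : B) : (spectrum ℂ x).Nonempty := by
  by_contra! hσ
  have hx : ∀ c : ℂ, IsUnit (algebraMap ℂ B c - x) :=
    fun c => spectrum.notMem_iff.1 (hσ ▸ Set.notMem_empty c)
  set s := fun c : ℂ => spectralRadiusOf ν (resolvent x c)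
  have hs_cont : Continuous s := continuous_of_le_add_dist_rpow_mul hν.q_pos
    (fun _ => hν.spectralRadiusOf_nonneg _) (hν.spectralRadiusOf_resolvent_le hx)
  have hs_pos : ∀ c, 0 < s c :=
    fun c => hν.spectralRadiusOf_pos ((spectrum.isUnit_resolvent (R := ℂ)).1 (hx c))
  have hs_lim : Tendsto s (cocompact ℂ) (𝓝 0) := hν.tendsto_spectralRadiusOf_resolvent_cocompact hx
  obtain ⟨d, hd⟩ := hs_cont.exists_forall_ge' 0
    ((hs_lim.eventually (gt_mem_nhds (hs_pos 0))).mono fun _ => le_of_lt)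
  have hopen : IsOpen {c | s c = s d} := isOpen_iff_mem_nhds.2 fun e (he : s e = s d) =>
    (hν.eventually_spectralRadiusOf_resolvent_eq hx fun c => (hd c).trans he.ge).mono
      fun _ hc => hc.trans he
  have hall : {c | s c = s d} = Set.univ :=
    IsClopen.eq_univ ⟨isClosed_eq hs_cont continuous_const, hopen⟩ ⟨d, rfl⟩
  obtain ⟨c, hc⟩ := (hs_lim.eventually (gt_mem_nhds (hs_pos d))).exists
  exact hc.ne (hall ▸ Set.mem_univ c : c ∈ {c | s c = s d})

end CommRing

/-- The double centralizer of `{x}` is a commutative subalgebra containing `x` which contains the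
inverse of each of its elements that is invertible in `A`, so `x` has the same spectrum there. -/
theorem spectrum_nonempty {A : Type*} [Ring A] [Algebra ℂ A] {ν : A → ℝ} {q : ℝ}
    (hν : IsSubmultiplicativeQSeminorm ν q) (x : A) : (spectrum ℂ x).Nonempty := by
  let S := Subalgebra.centralizer ℂ (Set.centralizer {x})
  let _ : CommRing S := { S.toRing with
    mul_comm := fun a b => Subtype.ext <|
      Set.centralizer_centralizer_comm_of_comm (by simp) _ a.2 _ b.2 }
  obtain ⟨c, hc⟩ := (hν.comp S.val).spectrum_nonempty_of_comm
    ⟨x, Set.subset_centralizer_centralizer rfl⟩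
  exact ⟨c, fun hu => hc (Subalgebra.isUnit_of_isUnit_coe_centralizer hu)⟩

end IsSubmultiplicativeQSeminorm

theorem QuasiBanachAlgebra.isSubmultiplicativeQSeminorm {A : Type*} [Ring A] [Algebra ℂ A]
    [MetricSpace A] [CompleteSpace A] (N : A → ℝ) (q Cp : ℝ) [h : QuasiBanachAlgebra A N q Cp] :
    IsSubmultiplicativeQSeminorm (fun x => (Cp * N x) ^ q) q := by
  have hCp : 0 ≤ Cp := zero_le_one.trans h.one_le_Cp
  have hCpN : ∀ x, 0 ≤ Cp * N x := fun x => mul_nonneg hCp (h.nonneg x)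
  refine ⟨h.q_pos, fun x => Real.rpow_nonneg (hCpN x) q, fun x y => ?_, fun x y => ?_,
    fun c x => ?_, ?_⟩
  · simp only [Real.mul_rpow hCp (h.nonneg _), ← mul_add]
    exact mul_le_mul_of_nonneg_left (h.add_pow_le x y) (Real.rpow_nonneg hCp q)
  · rw [← Real.mul_rpow (hCpN x) (hCpN y)]
    refine Real.rpow_le_rpow (hCpN _) ?_ h.q_pos.le
    nlinarith [h.mul_le x y]
  · rw [h.smul_eq, mul_left_comm, Real.mul_rpow (norm_nonneg c) (hCpN x)]
  · rw [h.norm_one, mul_one]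
    exact Real.one_le_rpow h.one_le_Cp h.q_pos.le

/-- Gelfand–Mazur for quasi-Banach algebras: if every nonzero element of `A` is
invertible, then `A` is isomorphic to `ℂ` via an isometric algebra isomorphism. -/
theorem gelfand_mazur_quasiBanach (A : Type*) [Ring A] [Algebra ℂ A] [MetricSpace A]
    [CompleteSpace A] (N : A → ℝ) (q Cp : ℝ) [QuasiBanachAlgebra A N q Cp]
    (hA : ∀ x : A, x ≠ 0 → IsUnit x) :
    ∃ f : A ≃ₐ[ℂ] ℂ, ∀ x : A, ‖f x‖ = N x := by
  have hν := QuasiBanachAlgebra.isSubmultiplicativeQSeminorm N q Cp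
  have := hν.nontrivial
  have hscalar : ∀ x : A, ∃ c : ℂ, algebraMap ℂ A c = x := fun x => by
    obtain ⟨c, hc⟩ := hν.spectrum_nonempty x
    exact ⟨c, sub_eq_zero.1 (by_contra fun h0 => spectrum.mem_iff.1 hc (hA _ h0))⟩
  let e : ℂ ≃ₐ[ℂ] A :=
    AlgEquiv.ofBijective (Algebra.ofId ℂ A) ⟨(algebraMap ℂ A).injective, hscalar⟩
  refine ⟨e.symm, fun x => ?_⟩
  obtain ⟨c, rfl⟩ := hscalar x
  rw [show e.symm (algebraMap ℂ A c) = c from e.symm_apply_apply c, Algebra.algebraMap_eq_smul_one,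
    QuasiBanachAlgebra.smul_eq (N := N) (q := q) (Cp := Cp),
    QuasiBanachAlgebra.norm_one (N := N) (q := q) (Cp := Cp), mul_one]
end

section
/- For a ∈ ℓ^1(ℤ^d), the convolution operator C_a : b ↦ a∗b is invertible on ℓ²(ℤ^d) if and only if the Fourier series 𝓕a(ξ) = ∑_{n∈ℤ^d} a(n) e^{2πi n·ξ} does not vanish at any ξ ∈ 𝕋^d. -/
/-!
Under the Fourier basis `mFourierBasis : L²(𝕋^d) ≃ ℓ²(ℤ^d)`, convolution by `a ∈ ℓ¹` corresponds
to multiplication by the continuous function `𝓕a = ∑ a n • mFourier n`, since multiplication by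
`mFourier n` shifts Fourier coefficients by `n`. Multiplication by a continuous function `φ` on a
compact space is invertible on `Lᵖ` exactly when `φ` has no zero: the inverse is multiplication
by `φ⁻¹`, and if `φ x₀ = 0`, indicators of the open sets `{‖φ‖ < ε}` around `x₀`, which have
positive measure, violate every lower bound `‖g‖ ≤ K ‖φ • g‖`.
-/

open MeasureTheory UnitAddTorus
open scoped Real ENNReal NNReal

noncomputable section

namespace MeasureTheory

variable {X 𝕜 E : Type*} [TopologicalSpace X] [CompactSpace X] [MeasurableSpace X] [BorelSpace X]
  [NontriviallyNormedField 𝕜] [SecondCountableTopologyEither X 𝕜]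
  [NormedAddCommGroup E] [NormedSpace 𝕜 E]
  {μ : Measure X} [IsFiniteMeasure μ] {p : ℝ≥0∞} [Fact (1 ≤ p)]

def mulLp : C(X, 𝕜) →L[𝕜] Lp E p μ →L[𝕜] Lp E p μ :=
  (ContinuousLinearMap.lsmul 𝕜 𝕜).holderL μ ∞ p p ∘L ContinuousMap.toLp ∞ μ 𝕜

theorem coeFn_mulLp (φ : C(X, 𝕜)) (g : Lp E p μ) : mulLp φ g =ᵐ[μ] fun x => φ x • g x := by
  filter_upwards [ContinuousLinearMap.coeFn_holder (r := p) (ContinuousLinearMap.lsmul 𝕜 𝕜)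
    (ContinuousMap.toLp ∞ μ 𝕜 φ) g, ContinuousMap.coeFn_toLp (p := ∞) (𝕜 := 𝕜) μ φ] with x h1 h2
  simp only [mulLp, ContinuousLinearMap.comp_apply, ContinuousLinearMap.holderL_apply_apply]
  rw [h1, h2, ContinuousLinearMap.lsmul_apply]

theorem mulLp_mul (φ ψ : C(X, 𝕜)) :
    mulLp (E := E) (μ := μ) (p := p) (φ * ψ) = mulLp φ * mulLp ψ := by
  ext1 g
  refine Lp.ext ?_
  filter_upwards [coeFn_mulLp (φ * ψ) g, coeFn_mulLp φ (mulLp ψ g), coeFn_mulLp ψ g]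
    with x h1 h2 h3
  simp [h1, h2, h3, mul_smul]

theorem mulLp_one : mulLp (E := E) (μ := μ) (p := p) (1 : C(X, 𝕜)) = 1 := by
  ext1 g
  refine Lp.ext ?_
  filter_upwards [coeFn_mulLp (1 : C(X, 𝕜)) g] with x h
  simp [h]

theorem isUnit_mulLp {φ : C(X, 𝕜)} (hφ : IsUnit φ) :
    IsUnit (mulLp (E := E) (μ := μ) (p := p) φ) :=
  hφ.map ({ toFun := mulLp, map_one' := mulLp_one, map_mul' := mulLp_mul } :
    C(X, 𝕜) →* (Lp E p μ →L[𝕜] Lp E p μ))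

theorem norm_mulLp_indicatorConstLp_le (φ : C(X, 𝕜)) {s : Set X} (hs : MeasurableSet s)
    (hμs : μ s ≠ ∞) (c : E) {ε : ℝ} (hφs : ∀ x ∈ s, ‖φ x‖ ≤ ε) :
    ‖mulLp φ (indicatorConstLp p hs hμs c)‖ ≤ ε * ‖indicatorConstLp p hs hμs c‖ := by
  refine Lp.norm_le_mul_norm_of_ae_le_mul ?_
  filter_upwards [coeFn_mulLp φ (indicatorConstLp p hs hμs c),
    indicatorConstLp_coeFn (p := p) (hs := hs) (hμs := hμs) (c := c)] with x h1 h2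
  rw [h1, h2]
  by_cases hx : x ∈ s
  · simpa [hx, norm_smul] using mul_le_mul_of_nonneg_right (hφs x hx) (norm_nonneg c)
  · simp [hx]

theorem apply_ne_zero_of_antilipschitzWith_mulLp [μ.IsOpenPosMeasure] [Nontrivial E]
    {φ : C(X, 𝕜)} {K : ℝ≥0} (hφ : AntilipschitzWith K (mulLp (E := E) (μ := μ) (p := p) φ))
    (x₀ : X) : φ x₀ ≠ 0 := by
  intro hx₀
  obtain ⟨c, hc⟩ := exists_ne (0 : E)
  set ε : ℝ := (K + 1)⁻¹
  set s := {x | ‖φ x‖ < ε}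
  have hs : IsOpen s := isOpen_lt (by fun_prop) continuous_const
  have hμs : μ s ≠ 0 := (hs.measure_pos μ ⟨x₀, by simp [s, ε, hx₀]; positivity⟩).ne'
  set g := indicatorConstLp p hs.measurableSet (measure_ne_top μ s) c
  have hg : 0 < ‖g‖ := by
    have : 0 < μ.real s := ENNReal.toReal_pos hμs (measure_ne_top μ s)
    rw [norm_indicatorConstLp' (zero_lt_one.trans_le Fact.out).ne' hμs]
    positivity
  have hsmall : ‖mulLp φ g‖ ≤ ε * ‖g‖ :=
    norm_mulLp_indicatorConstLp_le φ _ _ c fun x hx => le_of_lt hx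
  have hKε : (K : ℝ) * ε < 1 := by
    rw [mul_inv_lt_iff₀ (by positivity)]; linarith
  have : ‖g‖ < ‖g‖ :=
    calc ‖g‖ ≤ K * ‖mulLp φ g‖ := hφ.le_mul_norm (map_zero _) g
      _ ≤ K * (ε * ‖g‖) := by gcongr
      _ = (K * ε) * ‖g‖ := by ring
      _ < ‖g‖ := mul_lt_of_lt_one_left hg hKε
  exact lt_irrefl _ this

theorem exists_continuousLinearEquiv_eq_mulLp_iff [CompleteSpace 𝕜] [μ.IsOpenPosMeasure]
    [Nontrivial E] (φ : C(X, 𝕜)) :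
    (∃ e : Lp E p μ ≃L[𝕜] Lp E p μ, (e : Lp E p μ →L[𝕜] Lp E p μ) = mulLp φ) ↔
      ∀ x, φ x ≠ 0 := by
  constructor
  · rintro ⟨e, he⟩
    exact apply_ne_zero_of_antilipschitzWith_mulLp (by rw [← he]; exact e.antilipschitz)
  · intro hφ
    obtain ⟨u, hu⟩ := isUnit_mulLp (E := E) (μ := μ) (p := p)
      ((ContinuousMap.isUnit_iff_forall_ne_zero φ).2 hφ)
    exact ⟨ContinuousLinearEquiv.unitsEquiv 𝕜 _ u, hu⟩

end MeasureTheory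

namespace UnitAddTorus

/- Mathlib's `mFourierBasis` is a Hilbert basis of `L²` for the Haar probability measure
`instMeasureSpaceUnitAddCircle`, which is only a local instance there. -/
attribute [local instance] instMeasureSpaceUnitAddCircle

local notation "L²(" α ")" => Lp ℂ 2 (volume : Measure α)

instance : IsProbabilityMeasure (volume : Measure UnitAddCircle) :=
  inferInstanceAs (IsProbabilityMeasure AddCircle.haarAddCircle)

instance : (volume : Measure UnitAddCircle).IsAddHaarMeasure :=
  inferInstanceAs (AddCircle.haarAddCircle (T := 1)).IsAddHaarMeasure

variable {d : Type*} [Fintype d]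

theorem mFourier_coe_apply (n : d → ℤ) (ξ : d → ℝ) :
    mFourier n (fun i => (ξ i : UnitAddCircle)) =
      Complex.exp (2 * π * Complex.I * ∑ i, (n i : ℂ) * (ξ i : ℂ)) := by
  simp only [mFourier, ContinuousMap.coe_mk, fourier_coe_apply, Finset.mul_sum, ← Complex.exp_sum]
  congr 1
  refine Finset.sum_congr rfl fun i _ => ?_
  push_cast
  ring

def mFourierSeries (a : (d → ℤ) → ℂ) : C(UnitAddTorus d, ℂ) := ∑' n, a n • mFourier n

variable {a : (d → ℤ) → ℂ}

theorem summable_smul_mFourier (ha : Summable fun n => ‖a n‖) :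
    Summable fun n => a n • mFourier n :=
  .of_norm (by simpa only [norm_smul, mFourier_norm, mul_one] using ha)

theorem mFourierSeries_apply (ha : Summable fun n => ‖a n‖) (x : UnitAddTorus d) :
    mFourierSeries a x = ∑' n, a n * mFourier n x :=
  (ContinuousMap.evalCLM ℂ x).map_tsum (summable_smul_mFourier ha)

theorem mFourierBasis_repr_mulLp_mFourier (n k : d → ℤ) (g : L²(UnitAddTorus d)) :
    mFourierBasis.repr (mulLp (mFourier n) g) k = mFourierBasis.repr g (k - n) := by
  rw [mFourierBasis_repr, mFourierBasis_repr, mFourierCoeff, mFourierCoeff]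
  refine integral_congr_ae ?_
  filter_upwards [coeFn_mulLp (mFourier n) g] with x hx
  rw [hx, smul_smul, ← mFourier_add, neg_sub, sub_eq_neg_add]

theorem mFourierBasis_repr_mulLp_mFourierSeries (ha : Summable fun n => ‖a n‖)
    (g : L²(UnitAddTorus d)) (k : d → ℤ) :
    mFourierBasis.repr (mulLp (mFourierSeries a) g) k =
      ∑' j, a (k - j) * mFourierBasis.repr g j := by
  let L : C(UnitAddTorus d, ℂ) →L[ℂ] ℂ := innerSL ℂ (mFourierBasis k) ∘L (mulLp.flip g)
  have hL : ∀ φ, mFourierBasis.repr (mulLp φ g) k = L φ := fun φ =>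
    mFourierBasis.repr_apply_apply _ k
  rw [hL, mFourierSeries, L.map_tsum (summable_smul_mFourier ha)]
  simp_rw [map_smul, ← hL, mFourierBasis_repr_mulLp_mFourier, smul_eq_mul]
  rw [← (Equiv.subLeft k).tsum_eq]
  simp only [Equiv.subLeft_apply, sub_sub_cancel]

theorem exists_convolution_iff_exists_eq_mulLp (ha : Summable fun n => ‖a n‖) :
    (∃ T : lp (fun _ : d → ℤ => ℂ) 2 ≃L[ℂ] lp (fun _ : d → ℤ => ℂ) 2,
        ∀ b k, (T b : (d → ℤ) → ℂ) k = ∑' j, a (k - j) * b j) ↔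
      ∃ e : L²(UnitAddTorus d) ≃L[ℂ] L²(UnitAddTorus d),
        (e : L²(UnitAddTorus d) →L[ℂ] L²(UnitAddTorus d)) = mulLp (mFourierSeries a) := by
  let F := (mFourierBasis (d := d)).repr.toContinuousLinearEquiv
  constructor
  · rintro ⟨T, hT⟩
    refine ⟨(F.trans T).trans F.symm, ContinuousLinearMap.ext fun g => F.injective (lp.ext ?_)⟩
    ext k
    simp [F, hT, mFourierBasis_repr_mulLp_mFourierSeries ha]
  · rintro ⟨e, he⟩
    refine ⟨(F.symm.trans e).trans F, fun b k => ?_⟩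
    have he' : e (F.symm b) = mulLp (mFourierSeries a) (F.symm b) := by rw [← he]; rfl
    rw [ContinuousLinearEquiv.trans_apply, ContinuousLinearEquiv.trans_apply, he']
    simp [F, mFourierBasis_repr_mulLp_mFourierSeries ha]

end UnitAddTorus

end

/-- Wiener's lemma type characterization: for `a ∈ ℓ¹(ℤ^d)`, the convolution operator
`C_a : b ↦ a ∗ b` is invertible on `ℓ²(ℤ^d)` if and only if the Fourier series
`𝓕a(ξ) = ∑ₙ a(n) e^{2πi n·ξ}` does not vanish at any point of the torus. -/
theorem conv_invertible_iff_fourier_nonvanishing (d : ℕ)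
    (a : (Fin d → ℤ) → ℂ) (ha : Summable fun k => ‖a k‖) :
    (∃ T : lp (fun _ : (Fin d → ℤ) => ℂ) 2 ≃L[ℂ] lp (fun _ : (Fin d → ℤ) => ℂ) 2,
        ∀ (b : lp (fun _ : (Fin d → ℤ) => ℂ) 2) (k : Fin d → ℤ),
          (T b : ∀ _ : (Fin d → ℤ), ℂ) k = ∑' j, a (k - j) * b j) ↔
      ∀ ξ : Fin d → ℝ,
        (∑' n : Fin d → ℤ, a n * Complex.exp (2 * π * Complex.I * (∑ i, (n i : ℂ) * (ξ i : ℂ)))) ≠ 0 := by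
  have hcoe : Function.Surjective fun (ξ : Fin d → ℝ) i => (ξ i : UnitAddCircle) :=
    Function.Surjective.piMap fun _ => QuotientAddGroup.mk_surjective
  rw [exists_convolution_iff_exists_eq_mulLp ha, exists_continuousLinearEquiv_eq_mulLp_iff,
    hcoe.forall]
  simp only [mFourierSeries_apply ha, mFourier_coe_apply]
end

section
/- Let B = ℓ^q_{v_s}(ℤ^{2d}), 0 < q ≤ 1, s ≥ 0, and let Y be a solid quasi-Banach sequence space on ℤ^{2d} with B ∗ Y ⊆ Y (with norm estimate constant 1). Then every matrix A ∈ C_B acts boundedly on Y with ‖Ac‖_Y ≤ ‖A‖_{C_B}‖c‖_Y for all c ∈ Y. -/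
/-!
Put `b μ = sup_λ |a_{λ,λ-μ}|`. Then `|Ac| ≤ b ∗ |c|` pointwise, and solidity together with
`B ∗ Y ⊆ Y` gives the estimate, as long as the series defining `b ∗ |c|` converge. They do when
`|c| ≤ K v`, because `b v ∈ ℓ¹` for `q ≤ 1` and `v` is submultiplicative.

If `|c| / v` is unbounded, every nonnegative `h` is dominated by some `β ∗ c₁` with `c₁ ≤ |c|`
supported on a sparse sequence `(μ_n)` and `β` of arbitrarily small `ℓ^q_v`-norm. Enumerating the
lattice as `(λ_n)`, `β` carries the weight `h(λ_n) / |c(μ_n)|` at `λ_n - μ_n`; this is cheap since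
`|c(μ_n)| / v(μ_n)` is huge, and the sparseness of `(μ_n)` makes every series `(β ∗ c₁)(λ)` a
finite sum.
-/

open Function

theorem summable_of_summable_rpow {ι : Type*} {q : ℝ} (hq0 : 0 < q) (hq1 : q ≤ 1)
    {f : ι → ℝ} (hf : ∀ i, 0 ≤ f i) (h : Summable fun i => f i ^ q) : Summable f := by
  refine h.of_norm_bounded_eventually ?_
  filter_upwards [h.tendsto_cofinite_zero.eventually_le_const zero_lt_one] with i hi
  rw [Real.norm_of_nonneg (hf i)]
  refine Real.self_le_rpow_of_le_one (hf i) ?_ hq1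
  exact (Real.rpow_le_rpow_iff (hf i) zero_le_one hq0).1 (by rwa [Real.one_rpow])

theorem one_add_norm_sub_rpow_le {E : Type*} [SeminormedAddCommGroup E] {s : ℝ} (hs : 0 ≤ s)
    (x y : E) : (1 + ‖x - y‖) ^ s ≤ (1 + ‖x‖) ^ s * (1 + ‖y‖) ^ s := by
  rw [← Real.mul_rpow (by positivity) (by positivity)]
  refine Real.rpow_le_rpow (by positivity) ?_ hs
  nlinarith [norm_sub_le x y, norm_nonneg x, norm_nonneg y]

theorem norm_tsum_le_tsum_norm_of_finiteDimensional {ι E : Type*} [NormedAddCommGroup E]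
    [NormedSpace ℝ E] [FiniteDimensional ℝ E] (f : ι → E) : ‖∑' i, f i‖ ≤ ∑' i, ‖f i‖ := by
  by_cases hf : Summable fun i => ‖f i‖
  · exact norm_tsum_le_tsum_norm hf
  · rw [tsum_eq_zero_of_not_summable (summable_norm_iff.not.1 hf), norm_zero]
    exact tsum_nonneg fun i => norm_nonneg _

theorem exists_notMem_finset_mul_lt {ι : Type*} {v a : ι → ℝ} (hv : ∀ x, 0 < v x)
    (ha : ∀ x, 0 ≤ a x) (hunb : ∀ K, ∃ x, K * v x < a x) (K : ℝ) (s : Finset ι) :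
    ∃ x ∉ s, K * v x < a x := by
  have hS : 0 ≤ ∑ y ∈ s, a y / v y := Finset.sum_nonneg fun y _ => div_nonneg (ha y) (hv y).le
  obtain ⟨x, hx⟩ := hunb (|K| + ∑ y ∈ s, a y / v y)
  refine ⟨x, fun hxs => ?_, ?_⟩
  · have := Finset.single_le_sum (fun y _ => div_nonneg (ha y) (hv y).le) hxs
    rw [div_le_iff₀ (hv x)] at this
    nlinarith [abs_nonneg K, hv x]
  · nlinarith [le_abs_self K, hv x]

theorem exists_seq_forall_lt_of_forall_exists {α : Type*} [Nonempty α] {P : ℕ → α → Prop}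
    {r : ℕ → α → ℕ → α → Prop} (h : ∀ n (g : ℕ → α), ∃ y, P n y ∧ ∀ m < n, r m (g m) n y) :
    ∃ f : ℕ → α, ∀ n, P n (f n) ∧ ∀ m < n, r m (f m) n (f n) := by
  classical
  choose F hF using h
  let g : ℕ → ℕ → α := fun n =>
    Nat.rec (fun _ => Classical.arbitrary α) (fun k gk => update gk k (F k gk)) n
  have hg : ∀ n m, m < n → g n m = F m (g m) := by
    intro n
    induction n with
    | zero => intro m hm; omega
    | succ n ih =>
      intro m hm
      change update (g n) n (F n (g n)) m = _
      rcases Nat.lt_succ_iff_lt_or_eq.1 hm with hlt | rfl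
      · rw [update_of_ne hlt.ne, ih m hlt]
      · rw [update_self]
  refine ⟨fun n => F n (g n), fun n => ⟨(hF n (g n)).1, fun m hm => ?_⟩⟩
  simpa only [hg n m hm] using (hF n (g n)).2 m hm

theorem summable_extend_rpow_mul_rpow {α : Type*} {ι : ℕ → α} (hι : Injective ι) {w : ℕ → ℝ}
    (hw : ∀ n, 0 ≤ w n) {v : α → ℝ} (hv : ∀ x, 0 ≤ v x) {q ε : ℝ} (hq : 0 < q) (hε : 0 ≤ ε)
    (hwv : ∀ n, w n * v (ι n) ≤ (ε / 2 / 2 ^ n) ^ q⁻¹) :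
    Summable (fun x => extend ι w 0 x ^ q * v x ^ q) ∧
      ∑' x, extend ι w 0 x ^ q * v x ^ q ≤ ε := by
  set g := fun x => extend ι w 0 x ^ q * v x ^ q
  have hg0 : ∀ x ∉ Set.range ι, g x = 0 := fun x hx => by
    simp only [g, extend_apply' _ _ _ (by simpa using hx), Pi.zero_apply,
      Real.zero_rpow hq.ne', zero_mul]
  have hgι : ∀ n, g (ι n) ≤ ε / 2 / 2 ^ n := fun n => by
    simp only [g, hι.extend_apply]
    rw [← Real.mul_rpow (hw n) (hv _), ← Real.rpow_inv_rpow (by positivity : 0 ≤ ε / 2 / 2 ^ n)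
      hq.ne']
    exact Real.rpow_le_rpow (mul_nonneg (hw n) (hv _)) (hwv n) hq.le
  have hgι0 : ∀ n, 0 ≤ g (ι n) := fun n => by
    simp only [g, hι.extend_apply]
    exact mul_nonneg (Real.rpow_nonneg (hw n) _) (Real.rpow_nonneg (hv _) _)
  have hsum : Summable (g ∘ ι) :=
    (summable_geometric_two' ε).of_nonneg_of_le hgι0 hgι
  refine ⟨(hι.summable_iff hg0).1 hsum, ?_⟩
  rw [← hι.tsum_eq (support_subset_iff'.2 hg0)]
  exact (hsum.tsum_le_tsum hgι (summable_geometric_two' ε)).trans (tsum_geometric_two' ε).le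

section Sparse

variable {G : Type*} [AddCommGroup G]

theorem exists_sparse_seq {ℓ : ℕ → G} (hℓ : Injective ℓ) {P : ℕ → G → Prop}
    (hP : ∀ n (s : Finset G), ∃ y ∉ s, P n y) :
    ∃ μ : ℕ → G, (∀ n, P n (μ n)) ∧ ∀ j m n, ℓ j - μ m = ℓ n - μ n → m ≤ j ∧ n ≤ j := by
  classical
  obtain ⟨y₀, -, -⟩ := hP 0 ∅
  have : Nonempty G := ⟨y₀⟩
  -- For `m < n` and `j ≤ n`, `μ n` avoids the finitely many points making
  -- `ℓ j - μ m = ℓ n - μ n` or `ℓ j - μ n = ℓ m - μ m`.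
  obtain ⟨μ, hμ⟩ := exists_seq_forall_lt_of_forall_exists (P := P)
    (r := fun m x n y => ∀ j ≤ n, y ≠ x + ℓ n - ℓ j ∧ y ≠ x - ℓ m + ℓ j) fun n g => by
      let I := Finset.range n ×ˢ Finset.range (n + 1)
      obtain ⟨y, hys, hy⟩ := hP n (I.image (fun p => g p.1 + ℓ n - ℓ p.2) ∪
        I.image (fun p => g p.1 - ℓ p.1 + ℓ p.2))
      refine ⟨y, hy, fun m hm j hj => ⟨?_, ?_⟩⟩ <;> rintro rfl <;> apply hys <;>
        simp only [Finset.mem_union, Finset.mem_image] <;>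
        [left; right] <;> exact ⟨(m, j), by simp [I, hm, Nat.lt_succ_of_le hj], rfl⟩
  refine ⟨μ, fun n => (hμ n).1, fun j m n heq => ?_⟩
  rcases lt_trichotomy m n with hmn | rfl | hnm
  · by_contra! hj
    refine ((hμ n).2 m hmn j (by omega)).1 ?_
    rw [← sub_eq_zero] at heq ⊢
    rw [← heq]; abel
  · have := hℓ (sub_left_inj.1 heq); omega
  · by_contra! hj
    refine ((hμ m).2 n hnm j (by omega)).2 ?_
    rw [← sub_eq_zero] at heq ⊢
    rw [← neg_eq_zero, ← heq]; abel

theorem injective_sub_of_sparse {ℓ μ : ℕ → G}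
    (hsp : ∀ j m n, ℓ j - μ m = ℓ n - μ n → m ≤ j ∧ n ≤ j) : Injective fun n => ℓ n - μ n :=
  fun m n h => le_antisymm (hsp n n m h.symm).2 (hsp m m n h).2

theorem le_tsum_extend_mul_indicator {ℓ μ : ℕ → G}
    (hsp : ∀ j m n, ℓ j - μ m = ℓ n - μ n → m ≤ j ∧ n ≤ j) {w : ℕ → ℝ} (hw : ∀ n, 0 ≤ w n)
    {a : G → ℝ} (ha : ∀ x, 0 ≤ a x) (j : ℕ) :
    w j * a (μ j) ≤
      ∑' x, extend (fun n => ℓ n - μ n) w 0 (ℓ j - x) * (Set.range μ).indicator a x := by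
  classical
  have hι := injective_sub_of_sparse hsp
  set φ := fun x => extend (fun n => ℓ n - μ n) w 0 (ℓ j - x) * (Set.range μ).indicator a x
  have hβ0 : 0 ≤ extend (fun n => ℓ n - μ n) w 0 := extend_nonneg (fun n => hw n) le_rfl
  have hφ0 : ∀ x, 0 ≤ φ x := fun x =>
    mul_nonneg (hβ0 _) (Set.indicator_nonneg (fun y _ => ha y) x)
  have hsupp : ∀ x ∉ (Finset.range (j + 1)).image μ, φ x = 0 := by
    intro x hx
    by_contra hne
    obtain ⟨hβ, hγ⟩ := mul_ne_zero_iff.1 hne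
    obtain ⟨m, rfl⟩ : x ∈ Set.range μ := by
      by_contra h; exact hγ (Set.indicator_of_notMem h _)
    obtain ⟨n, hn⟩ : ∃ n, ℓ n - μ n = ℓ j - μ m := by
      by_contra h; exact hβ (extend_apply' _ _ _ h)
    exact hx (Finset.mem_image.2
      ⟨m, Finset.mem_range.2 (Nat.lt_succ_of_le (hsp j m n hn.symm).1), rfl⟩)
  have hφj : φ (μ j) = w j * a (μ j) := by
    simp only [φ, hι.extend_apply, Set.indicator_of_mem (Set.mem_range_self j)]
  exact hφj ▸ (summable_of_ne_finset_zero hsupp).le_tsum _ fun x _ => hφ0 x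

theorem exists_sparse_kernel [Countable G] {q : ℝ} (hq : 0 < q)
    {v : G → ℝ} (hv : ∀ x, 0 < v x) (hvsub : ∀ x y, v (x - y) ≤ v x * v y) {a : G → ℝ}
    (ha : ∀ x, 0 ≤ a x) (hunb : ∀ K, ∃ x, K * v x < a x) {h : G → ℝ} (hh : ∀ x, 0 ≤ h x)
    {ε : ℝ} (hε : 0 < ε) :
    ∃ β γ : G → ℝ, (∀ x, 0 ≤ β x) ∧ (∀ x, 0 ≤ γ x ∧ γ x ≤ a x) ∧
      Summable (fun x => β x ^ q * v x ^ q) ∧ ∑' x, β x ^ q * v x ^ q ≤ ε ∧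
      ∀ lam, h lam ≤ ∑' x, β (lam - x) * γ x := by
  have hfin := exists_notMem_finset_mul_lt hv ha hunb
  have : Infinite G := Infinite.of_not_fintype fun _ => by
    obtain ⟨x, hx, -⟩ := hfin 0 Finset.univ; exact hx (Finset.mem_univ x)
  obtain ⟨ℓ⟩ := nonempty_equiv_of_countable (α := ℕ) (β := G)
  set δ : ℕ → ℝ := fun n => (ε / 2 / 2 ^ n) ^ q⁻¹
  have hδ : ∀ n, 0 < δ n := fun n => by positivity
  -- `μ n` is chosen where `a / v` is so large that a tiny kernel value carries `h (ℓ n)`.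
  obtain ⟨μ, hμ, hsp⟩ := exists_sparse_seq ℓ.injective
    (P := fun n x => 0 < a x ∧ h (ℓ n) * v (ℓ n) * v x ≤ δ n * a x) fun n s => by
      obtain ⟨x, hxs, hx⟩ := hfin (h (ℓ n) * v (ℓ n) / δ n) s
      have hK : 0 ≤ h (ℓ n) * v (ℓ n) / δ n * v x := by
        have := hh (ℓ n); have := hv (ℓ n); have := hv x; have := hδ n; positivity
      refine ⟨x, hxs, hK.trans_lt hx, ?_⟩
      have := mul_le_mul_of_nonneg_left hx.le (hδ n).le
      rwa [div_mul_eq_mul_div, mul_div_cancel₀ _ (hδ n).ne'] at this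
  set w : ℕ → ℝ := fun n => h (ℓ n) / a (μ n)
  have hw : ∀ n, 0 ≤ w n := fun n => div_nonneg (hh _) (hμ n).1.le
  have hwv : ∀ n, w n * v (ℓ n - μ n) ≤ δ n := fun n => by
    calc w n * v (ℓ n - μ n) ≤ w n * (v (ℓ n) * v (μ n)) :=
          mul_le_mul_of_nonneg_left (hvsub _ _) (hw n)
      _ = h (ℓ n) * v (ℓ n) * v (μ n) / a (μ n) := by simp only [w]; ring
      _ ≤ δ n := (div_le_iff₀ (hμ n).1).2 (hμ n).2
  obtain ⟨hsum, htsum⟩ := summable_extend_rpow_mul_rpow (injective_sub_of_sparse hsp) hw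
    (fun x => (hv x).le) hq hε.le hwv
  have hβ0 : 0 ≤ extend (fun n => ℓ n - μ n) w 0 := extend_nonneg (fun n => hw n) le_rfl
  refine ⟨_, (Set.range μ).indicator a, hβ0, fun x => ?_, hsum, htsum, fun lam => ?_⟩
  · exact ⟨Set.indicator_nonneg (fun y _ => ha y) x, Set.indicator_le_self' (fun y _ => ha y) x⟩
  · obtain ⟨j, rfl⟩ := ℓ.surjective lam
    have := le_tsum_extend_mul_indicator hsp hw ha j
    rwa [div_mul_cancel₀ _ (hμ j).1.ne'] at this

end Sparse

section Weighted

variable {G : Type*} [AddCommGroup G] {q : ℝ} {v : G → ℝ}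

theorem summable_mul_of_le_mul_weight (hv : ∀ x, 0 ≤ v x) (hvsub : ∀ x y, v (x - y) ≤ v x * v y)
    {b : G → ℝ} (hb : ∀ x, 0 ≤ b x) (hbv : Summable fun x => b x * v x) {a : G → ℝ}
    (ha : ∀ x, 0 ≤ a x) {K : ℝ} (hK : ∀ x, a x ≤ K * v x) (lam : G) :
    Summable fun x => b (lam - x) * a x := by
  have hshift : Summable fun x => |K| * v lam * (b (lam - x) * v (lam - x)) :=
    ((Equiv.subLeft lam).summable_iff.2 hbv).mul_left _
  refine hshift.of_nonneg_of_le (fun x => mul_nonneg (hb _) (ha x)) fun x => ?_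
  have hvx : v x ≤ v lam * v (lam - x) := by simpa using hvsub lam (lam - x)
  have hax : a x ≤ |K| * (v lam * v (lam - x)) := (hK x).trans <|
    (mul_le_mul_of_nonneg_right (le_abs_self K) (hv x)).trans
      (mul_le_mul_of_nonneg_left hvx (abs_nonneg K))
  calc b (lam - x) * a x ≤ b (lam - x) * (|K| * (v lam * v (lam - x))) :=
        mul_le_mul_of_nonneg_left hax (hb _)
    _ = |K| * v lam * (b (lam - x) * v (lam - x)) := by ring

theorem exists_kernel_dominating [Countable G] (hq0 : 0 < q) (hq1 : q ≤ 1) (hv : ∀ x, 0 < v x)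
    (hvsub : ∀ x y, v (x - y) ≤ v x * v y) {b : G → ℝ} (hb0 : ∀ x, 0 ≤ b x)
    (hb : Summable fun x => b x ^ q * v x ^ q) {a : G → ℝ} (ha : ∀ x, 0 ≤ a x) {h : G → ℝ}
    (hh0 : ∀ x, 0 ≤ h x)
    (hh : ∀ lam, Summable (fun x => b (lam - x) * a x) → h lam ≤ ∑' x, b (lam - x) * a x) :
    ∃ β γ : G → ℝ, (∀ x, 0 ≤ β x) ∧ (∀ x, 0 ≤ γ x ∧ γ x ≤ a x) ∧
      Summable (fun x => β x ^ q * v x ^ q) ∧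
      ∑' x, β x ^ q * v x ^ q ≤ ∑' x, b x ^ q * v x ^ q ∧
      ∀ lam, h lam ≤ ∑' x, β (lam - x) * γ x := by
  by_cases hs : ∀ lam, Summable fun x => b (lam - x) * a x
  · exact ⟨b, a, hb0, fun x => ⟨ha x, le_rfl⟩, hb, le_rfl, fun lam => hh lam (hs lam)⟩
  -- A divergent series has `∑' = 0`, so `b` may fail to dominate; but then `a / v` is unbounded.
  obtain ⟨lam₀, hlam₀⟩ := not_forall.1 hs
  have hbv : Summable fun x => b x * v x :=
    summable_of_summable_rpow hq0 hq1 (fun x => mul_nonneg (hb0 x) (hv x).le) <| by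
      simpa only [Real.mul_rpow (hb0 _) (hv _).le] using hb
  have hunb : ∀ K, ∃ x, K * v x < a x := by
    by_contra! hK
    obtain ⟨K, hK⟩ := hK
    exact hlam₀ (summable_mul_of_le_mul_weight (fun x => (hv x).le) hvsub hb0 hbv ha hK lam₀)
  obtain ⟨x₀, hx₀⟩ : ∃ x, b x ≠ 0 := by
    by_contra! hb
    simp only [hb, zero_mul] at hlam₀
    exact hlam₀ summable_zero
  have hpos : 0 < ∑' x, b x ^ q * v x ^ q := by
    refine hb.tsum_pos (fun x => ?_) x₀ ?_
    · have := hb0 x; have := hv x; positivity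
    · have := (hb0 x₀).lt_of_ne' hx₀; have := hv x₀; positivity
  exact exists_sparse_kernel hq0 hv hvsub ha hunb hh0 hpos

end Weighted

namespace SequenceSpace

variable {G : Type*} [AddCommGroup G]

def IsSolid (Y : Set (G → ℂ)) (NY : (G → ℂ) → ℝ) : Prop :=
  ∀ c c' : G → ℂ, c' ∈ Y → (∀ lam, ‖c lam‖ ≤ ‖c' lam‖) → c ∈ Y ∧ NY c ≤ NY c'

/-- `B ∗ Y ⊆ Y` with constant one, for `B = ℓ^q_v`. -/
def ConvBounded (q : ℝ) (v : G → ℝ) (Y : Set (G → ℂ)) (NY : (G → ℂ) → ℝ) : Prop :=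
  ∀ b : G → ℂ, Summable (fun μ => ‖b μ‖ ^ q * v μ ^ q) →
    ∀ c ∈ Y, (fun lam => ∑' μ, b (lam - μ) * c μ) ∈ Y ∧
      NY (fun lam => ∑' μ, b (lam - μ) * c μ) ≤ (∑' μ, ‖b μ‖ ^ q * v μ ^ q) ^ (1 / q) * NY c

variable {q : ℝ} {v : G → ℝ} {Y : Set (G → ℂ)} {NY : (G → ℂ) → ℝ}

theorem nonneg_of_mem (hY : IsSolid Y NY) (hconv : ConvBounded q v Y NY) (hq : 0 < q)
    (hv : 1 ≤ v 0) {c : G → ℂ} (hc : c ∈ Y) : 0 ≤ NY c := by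
  classical
  -- `NY c ≤ NY (2 c) ≤ 2 v(0) NY c`, by solidity and by convolution with `2 δ₀`.
  set b : G → ℂ := Pi.single 0 2
  have hbc : (fun lam => ∑' μ, b (lam - μ) * c μ) = fun lam => 2 * c lam := by
    funext lam
    rw [tsum_eq_single lam fun μ hμ => by simp [b, sub_eq_zero, Ne.symm hμ]]
    simp [b]
  have hcost : ∀ μ, ‖b μ‖ ^ q * v μ ^ q = (Pi.single 0 (2 ^ q * v 0 ^ q) : G → ℝ) μ :=
    fun μ => by
    by_cases hμ : μ = 0
    · subst hμ; simp [b]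
    · simp [b, hμ, Real.zero_rpow hq.ne']
  obtain ⟨hmem, hle⟩ :=
    hconv b (by simpa only [hcost] using (hasSum_pi_single 0 _).summable) c hc
  rw [tsum_congr hcost, tsum_pi_single, ← Real.mul_rpow zero_le_two (by linarith),
    ← Real.rpow_mul (by positivity), mul_one_div_cancel hq.ne', Real.rpow_one] at hle
  rw [hbc] at hmem hle
  have := (hY c _ hmem fun lam => by
    rw [norm_mul, Complex.norm_two]; linarith [norm_nonneg (c lam)]).2
  nlinarith

theorem exists_mem_dominating (hY : IsSolid Y NY) (hconv : ConvBounded q v Y NY)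
    (hv : ∀ x, 0 ≤ v x) {β γ : G → ℝ} (hβ : ∀ x, 0 ≤ β x) (hγ : ∀ x, 0 ≤ γ x) {c : G → ℂ}
    (hc : c ∈ Y) (hγc : ∀ x, γ x ≤ ‖c x‖) (hsum : Summable fun x => β x ^ q * v x ^ q) :
    ∃ F ∈ Y, NY F ≤ (∑' x, β x ^ q * v x ^ q) ^ (1 / q) * NY c ∧
      ∀ lam, ∑' x, β (lam - x) * γ x ≤ ‖F lam‖ := by
  obtain ⟨hγY, hγN⟩ := hY (fun x => (γ x : ℂ)) c hc fun x => by
    simpa [Complex.norm_real, abs_of_nonneg (hγ x)] using hγc x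
  have hcost : ∀ x, ‖(β x : ℂ)‖ ^ q * v x ^ q = β x ^ q * v x ^ q := fun x => by
    rw [Complex.norm_real, Real.norm_of_nonneg (hβ x)]
  obtain ⟨hF, hNF⟩ := hconv (fun x => (β x : ℂ)) (by simpa only [hcost] using hsum) _ hγY
  refine ⟨_, hF, ?_, fun lam => le_of_eq ?_⟩
  · rw [tsum_congr hcost] at hNF
    exact hNF.trans (mul_le_mul_of_nonneg_left hγN
      (Real.rpow_nonneg (tsum_nonneg fun x => by have := hβ x; have := hv x; positivity) _))
  · simp_rw [← Complex.ofReal_mul, ← Complex.ofReal_tsum, Complex.norm_real]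
    exact (Real.norm_of_nonneg (tsum_nonneg fun x => mul_nonneg (hβ _) (hγ x))).symm

theorem matrix_action_mem_and_le [Countable G] (hq0 : 0 < q) (hq1 : q ≤ 1) (hv : ∀ x, 1 ≤ v x)
    (hvsub : ∀ x y, v (x - y) ≤ v x * v y) (hY : IsSolid Y NY) (hconv : ConvBounded q v Y NY)
    {A : G → G → ℂ} (hAbdd : ∀ μ, BddAbove (Set.range fun lam => ‖A lam (lam - μ)‖))
    (hA : Summable fun μ => (⨆ lam, ‖A lam (lam - μ)‖) ^ q * v μ ^ q) {c : G → ℂ} (hc : c ∈ Y) :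
    (fun lam => ∑' μ, A lam μ * c μ) ∈ Y ∧
      NY (fun lam => ∑' μ, A lam μ * c μ) ≤
        (∑' μ, (⨆ lam, ‖A lam (lam - μ)‖) ^ q * v μ ^ q) ^ (1 / q) * NY c := by
  have hv0 : ∀ x, 0 < v x := fun x => zero_lt_one.trans_le (hv x)
  set b := fun μ => ⨆ lam, ‖A lam (lam - μ)‖
  have hb0 : ∀ μ, 0 ≤ b μ := fun μ => (norm_nonneg _).trans (le_ciSup (hAbdd μ) 0)
  have hAb : ∀ lam μ, ‖A lam μ‖ * ‖c μ‖ ≤ b (lam - μ) * ‖c μ‖ := fun lam μ =>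
    mul_le_mul_of_nonneg_right (by simpa using le_ciSup (hAbdd (lam - μ)) lam) (norm_nonneg _)
  obtain ⟨β, γ, hβ, hγ, hβs, hβS, hdom⟩ := exists_kernel_dominating hq0 hq1 hv0 hvsub hb0 hA
    (fun x => norm_nonneg (c x)) (h := fun lam => ∑' μ, ‖A lam μ‖ * ‖c μ‖)
    (fun lam => tsum_nonneg fun μ => by positivity) fun lam hs =>
      (hs.of_nonneg_of_le (fun μ => by positivity) (hAb lam)).tsum_le_tsum (hAb lam) hs
  obtain ⟨F, hF, hNF, hFdom⟩ := exists_mem_dominating hY hconv (fun x => (hv0 x).le) hβ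
    (fun x => (hγ x).1) hc (fun x => (hγ x).2) hβs
  obtain ⟨hmem, hle⟩ := hY _ F hF fun lam =>
    ((norm_tsum_le_tsum_norm_of_finiteDimensional _).trans_eq
      (tsum_congr fun μ => norm_mul _ _)).trans ((hdom lam).trans (hFdom lam))
  refine ⟨hmem, hle.trans (hNF.trans (mul_le_mul_of_nonneg_right ?_ (nonneg_of_mem hY hconv hq0
    (hv 0) hc)))⟩
  exact Real.rpow_le_rpow (tsum_nonneg fun x => by have := hβ x; have := hv0 x; positivity) hβS
    (by positivity)

end SequenceSpace

/-- Boundedness of `C_B` matrices on solid sequence spaces: let `B = ℓ^q_{v_s}(ℤ^{2d})`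
and `Y` a solid quasi-Banach sequence space with `B ∗ Y ⊆ Y` (with constant 1). Then
every `A ∈ C_B` acts boundedly on `Y` with `‖Ac‖_Y ≤ ‖A‖_{C_B} ‖c‖_Y`. -/
theorem matrix_class_acts_on_solid (d : ℕ) (q s : ℝ) (hq0 : 0 < q) (hq1 : q ≤ 1) (hs : 0 ≤ s)
    (v : (Fin (2 * d) → ℤ) → ℝ)
    (hv : ∀ k, v k = (1 + ‖(fun i => (k i : ℝ) : Fin (2 * d) → ℝ)‖) ^ s)
    (Y : Set ((Fin (2 * d) → ℤ) → ℂ)) (NY : ((Fin (2 * d) → ℤ) → ℂ) → ℝ)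
    -- `Y` is solid:
    (hsolid : ∀ c c' : (Fin (2 * d) → ℤ) → ℂ, c' ∈ Y → (∀ lam, ‖c lam‖ ≤ ‖c' lam‖) →
      c ∈ Y ∧ NY c ≤ NY c')
    -- `B ∗ Y ⊆ Y` with norm estimate constant 1:
    (hBY : ∀ b : (Fin (2 * d) → ℤ) → ℂ, Summable (fun μ => ‖b μ‖ ^ q * v μ ^ q) →
      ∀ c ∈ Y, (fun lam => ∑' μ, b (lam - μ) * c μ) ∈ Y ∧
        NY (fun lam => ∑' μ, b (lam - μ) * c μ) ≤
          (∑' μ, ‖b μ‖ ^ q * v μ ^ q) ^ (1 / q) * NY c)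
    (A : (Fin (2 * d) → ℤ) → (Fin (2 * d) → ℤ) → ℂ)
    (hAbdd : ∀ μ, BddAbove (Set.range fun lam => ‖A lam (lam - μ)‖))
    (hA : Summable fun μ => (⨆ lam, ‖A lam (lam - μ)‖) ^ q * v μ ^ q) :
    ∀ c ∈ Y, (fun lam => ∑' μ, A lam μ * c μ) ∈ Y ∧
      NY (fun lam => ∑' μ, A lam μ * c μ) ≤
        (∑' μ, (⨆ lam, ‖A lam (lam - μ)‖) ^ q * v μ ^ q) ^ (1 / q) * NY c := by
  have hv1 : ∀ k, 1 ≤ v k := fun k => by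
    rw [hv]; exact Real.one_le_rpow (le_add_of_nonneg_right (norm_nonneg _)) hs
  have hvsub : ∀ k l, v (k - l) ≤ v k * v l := fun k l => by
    have hcast : (fun i => ((k - l) i : ℝ)) = (fun i => (k i : ℝ)) - fun i => (l i : ℝ) := by
      ext i; simp
    rw [hv, hv, hv, hcast]
    exact one_add_norm_sub_rpow_le hs _ _
  exact fun c hc =>
    SequenceSpace.matrix_action_mem_and_le hq0 hq1 hv1 hvsub hsolid hBY hAbdd hA hc
end

section
/- For 0 < q ≤ 1 and s ≥ 0, the Wiener amalgam space W(C, ℓ^q_{v_s})(ℝ^{2d}) is closed under convolution: if F, G ∈ W(C, ℓ^q_{v_s})(ℝ^{2d}) then F∗G ∈ W(C, ℓ^q_{v_s})(ℝ^{2d}) with ‖F∗G‖ ≤ C‖F‖‖G‖ for a constant C independent of F, G. -/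
/-!
Let `a k` be the supremum of `|F|` over the unit cube `k + [0,1]^d`, and `b k` that of `|G|`.
Splitting the integral over the cubes `n + [0,1)^d` gives the discrete domination
`|F ∗ G| ≤ ∑ₙ ∑_{e ∈ {-1,0,1}^d} a (k - n + e) b n` on the cube at `k`. Submultiplicativity of the
weight distributes `v k` over the two factors at the price of `v (-e)`, and for `q ≤ 1` the
`q`-th power is subadditive, `(∑ xᵢ)^q ≤ ∑ xᵢ^q`; summing over `k` therefore bounds the weighted
`ℓ^q` sum of the convolution by `(∑ₑ v (-e)^q) ‖a‖^q ‖b‖^q`. Continuity of `F ∗ G` follows from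
`ℓ^q ⊆ ℓ^1`: `F` is bounded and `G` is integrable.
-/

open scoped ENNReal
open MeasureTheory

namespace ENNReal

theorem rpow_finsetSum_le_sum_rpow {α : Type*} (s : Finset α) (f : α → ℝ≥0∞) {p : ℝ}
    (hp0 : 0 < p) (hp1 : p ≤ 1) : (∑ i ∈ s, f i) ^ p ≤ ∑ i ∈ s, f i ^ p := by
  classical
  induction s using Finset.induction_on with
  | empty => simp [ENNReal.zero_rpow_of_pos hp0]
  | insert a s ha ih =>
    rw [Finset.sum_insert ha, Finset.sum_insert ha]
    exact (rpow_add_le_add_rpow _ _ hp0.le hp1).trans (add_le_add_right ih _)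

theorem rpow_tsum_le_tsum_rpow_s17 {α : Type*} (f : α → ℝ≥0∞) {p : ℝ} (hp0 : 0 < p)
    (hp1 : p ≤ 1) : (∑' i, f i) ^ p ≤ ∑' i, f i ^ p := by
  rw [ENNReal.tsum_eq_iSup_sum]
  change orderIsoRpow p hp0 (⨆ s : Finset α, ∑ i ∈ s, f i) ≤ _
  rw [OrderIso.map_iSup]
  exact iSup_le fun s => (rpow_finsetSum_le_sum_rpow s f hp0 hp1).trans (ENNReal.sum_le_tsum s)

-- The real `⨆` of an unbounded family is the junk value `0`, which also lies below `C`.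
theorem ofReal_iSup_le {α : Type*} {f : α → ℝ} {C : ℝ≥0∞}
    (h : ∀ a, ENNReal.ofReal (f a) ≤ C) : ENNReal.ofReal (⨆ a, f a) ≤ C := by
  rcases eq_or_ne C ⊤ with rfl | hC
  · exact le_top
  · rw [ENNReal.ofReal_le_iff_le_toReal hC]
    exact Real.iSup_le (fun a => (ENNReal.ofReal_le_iff_le_toReal hC).1 (h a))
      ENNReal.toReal_nonneg

theorem ofReal_rpow_mul_rpow {x y q : ℝ} (hx : 0 ≤ x) (hy : 0 ≤ y) (hq : 0 ≤ q) :
    ENNReal.ofReal (x ^ q * y ^ q) = (ENNReal.ofReal x * ENNReal.ofReal y) ^ q := by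
  rw [ENNReal.ofReal_mul (Real.rpow_nonneg hx q), ENNReal.mul_rpow_of_nonneg _ _ hq,
    ENNReal.ofReal_rpow_of_nonneg hx hq, ENNReal.ofReal_rpow_of_nonneg hy hq]

end ENNReal

theorem summable_and_tsum_le_of_tsum_ofReal_le {α : Type*} {f : α → ℝ} (hf : ∀ a, 0 ≤ f a)
    {B : ℝ} (hB : 0 ≤ B) (h : ∑' a, ENNReal.ofReal (f a) ≤ ENNReal.ofReal B) :
    Summable f ∧ ∑' a, f a ≤ B := by
  have hs : Summable f := by
    simpa [ENNReal.toReal_ofReal (hf _)] using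
      ENNReal.summable_toReal (ne_top_of_le_ne_top ENNReal.ofReal_ne_top h)
  refine ⟨hs, ?_⟩
  rwa [← ENNReal.ofReal_le_ofReal_iff hB, ENNReal.ofReal_tsum_of_nonneg hf hs]

theorem summable_of_summable_rpow_mul_rpow {α : Type*} {f v : α → ℝ} {q : ℝ} (hq0 : 0 < q)
    (hq1 : q ≤ 1) (hf : ∀ k, 0 ≤ f k) (hv : ∀ k, 1 ≤ v k)
    (h : Summable fun k => f k ^ q * v k ^ q) : Summable f := by
  have hq : (ENNReal.ofReal q).toReal = q := ENNReal.toReal_ofReal hq0.le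
  have hfq : Summable fun k => ‖f k‖ ^ (ENNReal.ofReal q).toReal := by
    refine h.of_nonneg_of_le (fun k => by positivity) fun k => ?_
    rw [hq, Real.norm_of_nonneg (hf k)]
    exact le_mul_of_one_le_right (Real.rpow_nonneg (hf k) q) (Real.one_le_rpow (hv k) hq0.le)
  have hmem : Memℓp f 1 :=
    ((memℓp_gen_iff (by rwa [hq])).2 hfq).of_exponent_ge (ENNReal.ofReal_le_one.2 hq1)
  simpa [Real.norm_of_nonneg (hf _)] using (memℓp_gen_iff (by simp)).1 hmem

theorem one_add_norm_add_rpow_le {E : Type*} [SeminormedAddCommGroup E] {s : ℝ} (hs : 0 ≤ s)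
    (x y : E) : (1 + ‖x + y‖) ^ s ≤ (1 + ‖x‖) ^ s * (1 + ‖y‖) ^ s := by
  rw [← Real.mul_rpow (by positivity) (by positivity)]
  gcongr
  nlinarith [norm_add_le x y, norm_nonneg x, norm_nonneg y]

section DiscreteConvolution

variable {Γ : Type*} [AddCommGroup Γ] {q : ℝ} {w : Γ → ℝ≥0∞}

theorem weight_le_of_submultiplicative (hw : ∀ m n, w (m + n) ≤ w m * w n) (k n e : Γ) :
    w k ≤ w (k - n + e) * w n * w (-e) :=
  calc w k = w (k - n + e + n + -e) := by congr 1; abel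
    _ ≤ w (k - n + e + n) * w (-e) := hw _ _
    _ ≤ w (k - n + e) * w n * w (-e) := mul_le_mul_left (hw _ _) _

theorem rpow_mul_weight_le_tsum (hq0 : 0 < q) (hq1 : q ≤ 1)
    (hw : ∀ m n, w (m + n) ≤ w m * w n) (E : Finset Γ) {a b : Γ → ℝ≥0∞} {c : ℝ≥0∞} {k : Γ}
    (hc : c ≤ ∑' n, ∑ e ∈ E, a (k - n + e) * b n) :
    (c * w k) ^ q ≤ ∑' n, ∑ e ∈ E,
      (a (k - n + e) * w (k - n + e)) ^ q * ((b n * w n) ^ q * w (-e) ^ q) :=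
  calc (c * w k) ^ q ≤ ((∑' n, ∑ e ∈ E, a (k - n + e) * b n) * w k) ^ q := by gcongr
    _ = (∑' n, ∑ e ∈ E, a (k - n + e) * b n * w k) ^ q := by
        simp only [← ENNReal.tsum_mul_right, Finset.sum_mul]
    _ ≤ ∑' n, ∑ e ∈ E, (a (k - n + e) * b n * w k) ^ q :=
        (ENNReal.rpow_tsum_le_tsum_rpow_s17 _ hq0 hq1).trans <| ENNReal.tsum_le_tsum fun n =>
          ENNReal.rpow_finsetSum_le_sum_rpow _ _ hq0 hq1
    _ ≤ _ := by
        gcongr ∑' n, ∑ e ∈ E, ?_ with n e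
        calc (a (k - n + e) * b n * w k) ^ q
            ≤ (a (k - n + e) * b n * (w (k - n + e) * w n * w (-e))) ^ q := by
              gcongr; exact weight_le_of_submultiplicative hw k n e
          _ = _ := by
              rw [← ENNReal.mul_rpow_of_nonneg _ _ hq0.le,
                ← ENNReal.mul_rpow_of_nonneg _ _ hq0.le]
              congr 1; ring

theorem tsum_rpow_mul_weight_le (hq0 : 0 < q) (hq1 : q ≤ 1)
    (hw : ∀ m n, w (m + n) ≤ w m * w n) (E : Finset Γ) {a b c : Γ → ℝ≥0∞}
    (hc : ∀ k, c k ≤ ∑' n, ∑ e ∈ E, a (k - n + e) * b n) :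
    ∑' k, (c k * w k) ^ q ≤
      (∑ e ∈ E, w (-e) ^ q) * (∑' k, (a k * w k) ^ q) * ∑' k, (b k * w k) ^ q := by
  have hshift : ∀ n e : Γ, ∑' k, (a (k - n + e) * w (k - n + e)) ^ q = ∑' k, (a k * w k) ^ q :=
    fun n e => by
      simpa only [Equiv.coe_addRight, sub_add_eq_add_sub, add_sub_assoc] using
        (Equiv.addRight (e - n)).tsum_eq fun k => (a k * w k) ^ q
  calc ∑' k, (c k * w k) ^ q ≤ ∑' k, ∑' n, ∑ e ∈ E,
        (a (k - n + e) * w (k - n + e)) ^ q * ((b n * w n) ^ q * w (-e) ^ q) :=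
        ENNReal.tsum_le_tsum fun k => rpow_mul_weight_le_tsum hq0 hq1 hw E (hc k)
    _ = ∑' n, ∑ e ∈ E, (∑' k, (a k * w k) ^ q) * ((b n * w n) ^ q * w (-e) ^ q) := by
        rw [ENNReal.tsum_comm]
        refine tsum_congr fun n => ?_
        rw [Summable.tsum_finsetSum fun _ _ => ENNReal.summable]
        simp only [ENNReal.tsum_mul_right, hshift]
    _ = _ := by
        simp only [← Finset.mul_sum, ENNReal.tsum_mul_left, ENNReal.tsum_mul_right]
        ring

end DiscreteConvolution

noncomputable section

namespace WienerAmalgam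

variable {ι : Type*}

def intFloor (x : ι → ℝ) : ι → ℤ := fun i => ⌊x i⌋

def unitBox (ι : Type*) [Fintype ι] [DecidableEq ι] : Finset (ι → ℤ) :=
  Fintype.piFinset fun _ => Finset.Icc (-1) 1

theorem measurable_intFloor : Measurable (intFloor : (ι → ℝ) → ι → ℤ) :=
  measurable_pi_lambda _ fun i => Int.measurable_floor.comp (measurable_pi_apply i)

theorem intFloor_preimage_singleton (n : ι → ℤ) :
    intFloor ⁻¹' {n} = Set.univ.pi fun i => Set.Ico (n i : ℝ) (n i + 1) := by
  ext x
  simp [intFloor, funext_iff, Int.floor_eq_iff]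

theorem volume_intFloor_preimage_singleton [Fintype ι] (n : ι → ℤ) :
    volume (intFloor ⁻¹' {n}) = 1 := by
  simp [intFloor_preimage_singleton, volume_pi_pi, Real.volume_Ico]

theorem lintegral_le_tsum_of_le_intFloor [Fintype ι] {f : (ι → ℝ) → ℝ≥0∞}
    {g : (ι → ℤ) → ℝ≥0∞} (h : ∀ y, f y ≤ g (intFloor y)) : ∫⁻ y, f y ≤ ∑' n, g n :=
  calc ∫⁻ y, f y = ∑' n, ∫⁻ y in intFloor ⁻¹' {n}, f y := by
        rw [← lintegral_iUnion (fun n => measurable_intFloor (measurableSet_singleton n))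
          (pairwise_disjoint_fiber _), ← Set.preimage_iUnion, Set.iUnion_of_singleton,
          Set.preimage_univ, setLIntegral_univ]
    _ ≤ ∑' n, ∫⁻ _ in intFloor ⁻¹' {n}, g n :=
        ENNReal.tsum_le_tsum fun n =>
          setLIntegral_mono' (measurable_intFloor (measurableSet_singleton n))
            fun y hy => (h y).trans_eq (congrArg g hy)
    _ = ∑' n, g n := by simp [volume_intFloor_preimage_singleton]

theorem intFloor_sub_mem_unitBox [Fintype ι] [DecidableEq ι] {z : ι → ℝ}
    (hz : z ∈ Set.Icc 0 1) (k : ι → ℤ) (y : ι → ℝ) :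
    intFloor ((z + fun i => (k i : ℝ)) - y) - (k - intFloor y) ∈ unitBox ι := by
  simp only [unitBox, Fintype.mem_piFinset, Finset.mem_Icc]
  intro i
  have hz0 : 0 ≤ z i := hz.1 i
  have hz1 : z i ≤ 1 := hz.2 i
  have hy0 := Int.floor_le (y i)
  have hy1 := Int.lt_floor_add_one (y i)
  simp only [intFloor, Pi.sub_apply, Pi.add_apply]
  constructor
  · have : k i - ⌊y i⌋ - 1 ≤ ⌊z i + k i - y i⌋ := Int.le_floor.2 (by push_cast; linarith)
    omega
  · have : ⌊z i + k i - y i⌋ < k i - ⌊y i⌋ + 1 + 1 := Int.floor_lt.2 (by push_cast; linarith)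
    omega

section LocalSup

variable {E : Type*} [SeminormedAddCommGroup E]

def localSup (F : (ι → ℝ) → E) (k : ι → ℤ) : ℝ :=
  ⨆ z : Set.Icc (0 : ι → ℝ) 1, ‖F ((z : ι → ℝ) + fun i => (k i : ℝ))‖

theorem localSup_nonneg (F : (ι → ℝ) → E) (k : ι → ℤ) : 0 ≤ localSup F k :=
  Real.iSup_nonneg fun _ => norm_nonneg _

theorem norm_le_localSup {F : (ι → ℝ) → E} (hF : Continuous F) (x : ι → ℝ) :
    ‖F x‖ ≤ localSup F (intFloor x) := by
  have hbdd := (isCompact_Icc (a := (0 : ι → ℝ)) (b := 1)).bddAbove_image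
    (f := fun z => ‖F (z + fun i => (intFloor x i : ℝ))‖) (by fun_prop)
  rw [Set.image_eq_range] at hbdd
  have hfract : (fun i => Int.fract (x i)) ∈ Set.Icc (0 : ι → ℝ) 1 :=
    ⟨fun i => Int.fract_nonneg _, fun i => (Int.fract_lt_one _).le⟩
  calc ‖F x‖ = ‖F ((fun i => Int.fract (x i)) + fun i => (intFloor x i : ℝ))‖ := by
        congr; ext i; exact (Int.fract_add_floor (x i)).symm
    _ ≤ localSup F (intFloor x) := le_ciSup hbdd ⟨_, hfract⟩

def amalgamNorm (q : ℝ) (v : (ι → ℤ) → ℝ) (F : (ι → ℝ) → E) : ℝ :=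
  (∑' k, localSup F k ^ q * v k ^ q) ^ (1 / q)

theorem localSup_rpow_mul_rpow_nonneg {q : ℝ} {v : (ι → ℤ) → ℝ} (hv : ∀ k, 0 ≤ v k)
    (F : (ι → ℝ) → E) (k : ι → ℤ) : 0 ≤ localSup F k ^ q * v k ^ q :=
  mul_nonneg (Real.rpow_nonneg (localSup_nonneg F k) q) (Real.rpow_nonneg (hv k) q)

theorem enorm_le_ofReal_localSup {F : (ι → ℝ) → E} (hF : Continuous F) (x : ι → ℝ) :
    ‖F x‖ₑ ≤ ENNReal.ofReal (localSup F (intFloor x)) := by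
  rw [← ofReal_norm]
  exact ENNReal.ofReal_le_ofReal (norm_le_localSup hF x)

theorem bddAbove_range_norm_of_summable_localSup {F : (ι → ℝ) → E} (hF : Continuous F)
    (hs : Summable (localSup F)) : BddAbove (Set.range fun x => ‖F x‖) := by
  refine ⟨∑' k, localSup F k, ?_⟩
  rintro _ ⟨x, rfl⟩
  exact (norm_le_localSup hF x).trans (hs.le_tsum _ fun j _ => localSup_nonneg F j)

theorem integrable_of_summable_localSup [Fintype ι] {F : (ι → ℝ) → E} (hF : Continuous F)
    (hs : Summable (localSup F)) : Integrable F := by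
  refine ⟨hF.aestronglyMeasurable, ?_⟩
  calc ∫⁻ y, ‖F y‖ₑ ≤ ∑' n, ENNReal.ofReal (localSup F n) :=
        lintegral_le_tsum_of_le_intFloor (enorm_le_ofReal_localSup hF)
    _ = ENNReal.ofReal (∑' n, localSup F n) :=
        (ENNReal.ofReal_tsum_of_nonneg (localSup_nonneg F) hs).symm
    _ < ⊤ := ENNReal.ofReal_lt_top

end LocalSup

section Convolution

variable [Fintype ι] {𝕜 : Type*} [RCLike 𝕜]

theorem continuous_integral_mul_sub {F G : (ι → ℝ) → 𝕜} (hF : Continuous F)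
    (hFb : BddAbove (Set.range fun x => ‖F x‖)) (hG : Integrable G) :
    Continuous fun x => ∫ y, F (x - y) * G y := by
  have := hFb.continuous_convolution_left_of_integrable (ContinuousLinearMap.mul 𝕜 𝕜) hF hG
  convert this using 1
  ext x
  exact convolution_mul_swap.symm

variable [DecidableEq ι]

theorem ofReal_localSup_integral_mul_sub_le {F G : (ι → ℝ) → 𝕜}
    (hF : Continuous F) (hG : Continuous G) (k : ι → ℤ) :
    ENNReal.ofReal (localSup (fun x => ∫ y, F (x - y) * G y) k) ≤
      ∑' n, ∑ e ∈ unitBox ι,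
        ENNReal.ofReal (localSup F (k - n + e)) * ENNReal.ofReal (localSup G n) := by
  refine ENNReal.ofReal_iSup_le fun z => ?_
  rw [ofReal_norm]
  refine (enorm_integral_le_lintegral_enorm _).trans
    (lintegral_le_tsum_of_le_intFloor fun y => ?_)
  set x : ι → ℝ := (z : ι → ℝ) + fun i => (k i : ℝ)
  have hmem := intFloor_sub_mem_unitBox z.2 k y
  rw [enorm_mul, ← Finset.sum_mul]
  gcongr ?_ * ?_
  · calc ‖F (x - y)‖ₑ ≤ ENNReal.ofReal (localSup F (intFloor (x - y))) :=
          enorm_le_ofReal_localSup hF _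
      _ = ENNReal.ofReal
            (localSup F (k - intFloor y + (intFloor (x - y) - (k - intFloor y)))) := by
          rw [add_sub_cancel]
      _ ≤ _ := Finset.single_le_sum
          (f := fun e => ENNReal.ofReal (localSup F (k - intFloor y + e))) (fun _ _ => zero_le) hmem
  · exact enorm_le_ofReal_localSup hG y

variable {q : ℝ} {v : (ι → ℤ) → ℝ}

theorem summable_localSup_integral_mul_sub_and_tsum_le (hq0 : 0 < q) (hq1 : q ≤ 1)
    (hv1 : ∀ k, 1 ≤ v k) (hv : ∀ m n, v (m + n) ≤ v m * v n) {F G : (ι → ℝ) → 𝕜}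
    (hF : Continuous F) (hG : Continuous G)
    (hsF : Summable fun k => localSup F k ^ q * v k ^ q)
    (hsG : Summable fun k => localSup G k ^ q * v k ^ q) :
    Summable (fun k => localSup (fun x => ∫ y, F (x - y) * G y) k ^ q * v k ^ q) ∧
      ∑' k, localSup (fun x => ∫ y, F (x - y) * G y) k ^ q * v k ^ q ≤
        (∑ e ∈ unitBox ι, v (-e) ^ q) * (∑' k, localSup F k ^ q * v k ^ q) *
          ∑' k, localSup G k ^ q * v k ^ q := by
  have hv0 : ∀ k, 0 ≤ v k := fun k => zero_le_one.trans (hv1 k)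
  have hterm : ∀ (H : (ι → ℝ) → 𝕜) k, ENNReal.ofReal (localSup H k ^ q * v k ^ q) =
      (ENNReal.ofReal (localSup H k) * ENNReal.ofReal (v k)) ^ q := fun H k =>
    ENNReal.ofReal_rpow_mul_rpow (localSup_nonneg H k) (hv0 k) hq0.le
  have hnn := localSup_rpow_mul_rpow_nonneg (E := 𝕜) (q := q) hv0
  have hK : 0 ≤ ∑ e ∈ unitBox ι, v (-e) ^ q :=
    Finset.sum_nonneg fun e _ => Real.rpow_nonneg (hv0 _) q
  refine summable_and_tsum_le_of_tsum_ofReal_le (hnn _) (mul_nonneg (mul_nonneg hK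
    (tsum_nonneg (hnn F))) (tsum_nonneg (hnn G))) ?_
  rw [ENNReal.ofReal_mul (mul_nonneg hK (tsum_nonneg (hnn F))), ENNReal.ofReal_mul hK,
    ENNReal.ofReal_sum_of_nonneg (fun e _ => Real.rpow_nonneg (hv0 _) q),
    ENNReal.ofReal_tsum_of_nonneg (hnn F) hsF, ENNReal.ofReal_tsum_of_nonneg (hnn G) hsG]
  simp only [hterm, ← ENNReal.ofReal_rpow_of_nonneg (hv0 _) hq0.le]
  refine tsum_rpow_mul_weight_le hq0 hq1 (w := fun k => ENNReal.ofReal (v k)) (fun m n => ?_) _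
    (ofReal_localSup_integral_mul_sub_le hF hG)
  rw [← ENNReal.ofReal_mul (hv0 m)]
  exact ENNReal.ofReal_le_ofReal (hv m n)

theorem amalgamNorm_integral_mul_sub_le (hq0 : 0 < q) (hq1 : q ≤ 1)
    (hv1 : ∀ k, 1 ≤ v k) (hv : ∀ m n, v (m + n) ≤ v m * v n) {F G : (ι → ℝ) → 𝕜}
    (hF : Continuous F) (hG : Continuous G)
    (hsF : Summable fun k => localSup F k ^ q * v k ^ q)
    (hsG : Summable fun k => localSup G k ^ q * v k ^ q) :
    Continuous (fun x => ∫ y, F (x - y) * G y) ∧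
      Summable (fun k => localSup (fun x => ∫ y, F (x - y) * G y) k ^ q * v k ^ q) ∧
      amalgamNorm q v (fun x => ∫ y, F (x - y) * G y) ≤
        (∑ e ∈ unitBox ι, v (-e) ^ q) ^ (1 / q) * amalgamNorm q v F * amalgamNorm q v G := by
  have hv0 : ∀ k, 0 ≤ v k := fun k => zero_le_one.trans (hv1 k)
  have hnn := localSup_rpow_mul_rpow_nonneg (E := 𝕜) (q := q) hv0
  have hK : 0 ≤ ∑ e ∈ unitBox ι, v (-e) ^ q :=
    Finset.sum_nonneg fun e _ => Real.rpow_nonneg (hv0 _) q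
  have hFb := bddAbove_range_norm_of_summable_localSup hF
    (summable_of_summable_rpow_mul_rpow hq0 hq1 (localSup_nonneg F) hv1 hsF)
  have hGi := integrable_of_summable_localSup hG
    (summable_of_summable_rpow_mul_rpow hq0 hq1 (localSup_nonneg G) hv1 hsG)
  obtain ⟨hs, hle⟩ :=
    summable_localSup_integral_mul_sub_and_tsum_le hq0 hq1 hv1 hv hF hG hsF hsG
  refine ⟨continuous_integral_mul_sub hF hFb hGi, hs, ?_⟩
  rw [amalgamNorm, amalgamNorm, amalgamNorm,
    ← Real.mul_rpow hK (tsum_nonneg (hnn F)),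
    ← Real.mul_rpow (mul_nonneg hK (tsum_nonneg (hnn F))) (tsum_nonneg (hnn G))]
  exact Real.rpow_le_rpow (tsum_nonneg (hnn _)) hle (one_div_nonneg.2 hq0.le)

end Convolution

end WienerAmalgam

end

open WienerAmalgam in
/-- Convolution relation for Wiener amalgam spaces: for `0 < q ≤ 1` and `s ≥ 0`,
`W(C, ℓ^q_{v_s})(ℝ^{2d}) ∗ W(C, ℓ^q_{v_s})(ℝ^{2d}) ⊆ W(C, ℓ^q_{v_s})(ℝ^{2d})`, with a
norm estimate `‖F∗G‖ ≤ C ‖F‖ ‖G‖` whose constant is independent of `F` and `G`. -/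
theorem wiener_amalgam_convolution (d : ℕ) (q s : ℝ) (hq0 : 0 < q) (hq1 : q ≤ 1)
    (hs : 0 ≤ s) (v : (Fin (2 * d) → ℤ) → ℝ)
    (hv : ∀ k, v k = (1 + ‖(fun i => (k i : ℝ) : Fin (2 * d) → ℝ)‖) ^ s) :
    ∃ C > 0, ∀ F G : (Fin (2 * d) → ℝ) → ℂ, Continuous F → Continuous G →
      Summable (fun k : Fin (2 * d) → ℤ =>
        (⨆ z : Set.Icc (0 : Fin (2 * d) → ℝ) 1,
          ‖F ((z : Fin (2 * d) → ℝ) + fun i => (k i : ℝ))‖) ^ q * v k ^ q) →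
      Summable (fun k : Fin (2 * d) → ℤ =>
        (⨆ z : Set.Icc (0 : Fin (2 * d) → ℝ) 1,
          ‖G ((z : Fin (2 * d) → ℝ) + fun i => (k i : ℝ))‖) ^ q * v k ^ q) →
      Continuous (fun z : Fin (2 * d) → ℝ => ∫ y, F (z - y) * G y) ∧
      Summable (fun k : Fin (2 * d) → ℤ =>
        (⨆ z : Set.Icc (0 : Fin (2 * d) → ℝ) 1,
          ‖∫ y, F (((z : Fin (2 * d) → ℝ) + fun i => (k i : ℝ)) - y) * G y‖) ^ q * v k ^ q) ∧
      (∑' k : Fin (2 * d) → ℤ,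
        (⨆ z : Set.Icc (0 : Fin (2 * d) → ℝ) 1,
          ‖∫ y, F (((z : Fin (2 * d) → ℝ) + fun i => (k i : ℝ)) - y) * G y‖) ^ q * v k ^ q) ^ (1 / q) ≤
        C * (∑' k : Fin (2 * d) → ℤ,
          (⨆ z : Set.Icc (0 : Fin (2 * d) → ℝ) 1,
            ‖F ((z : Fin (2 * d) → ℝ) + fun i => (k i : ℝ))‖) ^ q * v k ^ q) ^ (1 / q) *
          (∑' k : Fin (2 * d) → ℤ,
            (⨆ z : Set.Icc (0 : Fin (2 * d) → ℝ) 1,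
              ‖G ((z : Fin (2 * d) → ℝ) + fun i => (k i : ℝ))‖) ^ q * v k ^ q) ^ (1 / q) := by
  have hv1 : ∀ k, 1 ≤ v k := fun k =>
    (hv k).symm ▸ Real.one_le_rpow (le_add_of_nonneg_right (norm_nonneg _)) hs
  have hv_add : ∀ m n, v (m + n) ≤ v m * v n := fun m n => by
    have hcast : (fun i => ((m + n) i : ℝ)) = (fun i => (m i : ℝ)) + fun i => (n i : ℝ) := by
      ext i; simp
    rw [hv, hv, hv, hcast]
    exact one_add_norm_add_rpow_le hs _ _
  have hK : 0 < ∑ e ∈ unitBox (Fin (2 * d)), v (-e) ^ q :=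
    Finset.sum_pos (fun e _ => Real.rpow_pos_of_pos (one_pos.trans_le (hv1 _)) q)
      ⟨0, by simp [unitBox]⟩
  exact ⟨_, Real.rpow_pos_of_pos hK _, fun F G hF hG hsF hsG =>
    amalgamNorm_integral_mul_sub_le hq0 hq1 hv1 hv_add hF hG hsF hsG⟩
end
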